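/- arXiv:1003.1362 — 7 statements merged into one kernel-verified Lean document; each statement's English description precedes it below -/
import Mathlib

section
/- Assume S is non-singular. Let z be real with 0 < z < 1/k and let x ∈ ℂ with |x| = 1 be such that a(x;z) ≠ 0. Then the two complex roots y₀, y₁ of the quadratic equation a(x;z)·Y² + b(x;z)·Y + c(x;z) = 0 satisfy min(|y₀|, |y₁|) < 1; moreover neither root has modulus equal to 1. -/
/-- `c(x;z) = z·Σ_{(i,−1)∈S} x^{i+1}`. -/
noncomputable def cpoly (S : Finset (ℤ × ℤ)) (x z : ℂ) : ℂ :=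
  z * ∑ p ∈ S.filter (fun p => p.2 = -1), x ^ (p.1 + 1)

/-- `a(x;z) = z·Σ_{(i,1)∈S} x^{i+1}`. -/
noncomputable def apoly (S : Finset (ℤ × ℤ)) (x z : ℂ) : ℂ :=
  z * ∑ p ∈ S.filter (fun p => p.2 = 1), x ^ (p.1 + 1)

/-- `b(x;z) = −1 + z·Σ_{(i,0)∈S} x^{i+1}`. -/
noncomputable def bpoly (S : Finset (ℤ × ℤ)) (x z : ℂ) : ℂ :=
  -1 + z * ∑ p ∈ S.filter (fun p => p.2 = 0), x ^ (p.1 + 1)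

/-- A step set is singular if it contains `(−1,1)` and `(1,−1)` and all its other
steps lie in `{(0,1),(1,1),(1,0)}`. -/
def IsSingular (S : Finset (ℤ × ℤ)) : Prop :=
  ((-1, 1) : ℤ × ℤ) ∈ S ∧ ((1, -1) : ℤ × ℤ) ∈ S ∧
    ∀ p ∈ S, p = ((-1, 1) : ℤ × ℤ) ∨ p = ((1, -1) : ℤ × ℤ) ∨
      p = ((0, 1) : ℤ × ℤ) ∨ p = ((1, 1) : ℤ × ℤ) ∨ p = ((1, 0) : ℤ × ℤ)

/-!
On `|x| = |Y| = 1` the triangle inequality gives `‖K(Y) + Y‖ ≤ z·k < 1 = ‖Y‖`, so the kernel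
`K(Y) = a Y² + b Y + c` has no zero on the unit circle. If it had no zero in the closed unit disc
either, `u(Y) = Y / K(Y)` would be holomorphic there with `u(0) = 0` and `Re u < 0` on the circle;
the maximum modulus principle for `exp ∘ u` then gives `1 = ‖exp (u 0)‖ < 1`.
-/

open Complex Finset Metric

lemma norm_sum_zpow_le_card {ι : Type*} (s : Finset ι) (e : ι → ℤ) {x : ℂ} (hx : ‖x‖ = 1) :
    ‖∑ i ∈ s, x ^ e i‖ ≤ #s := by
  calc ‖∑ i ∈ s, x ^ e i‖ ≤ ∑ i ∈ s, ‖x ^ e i‖ := norm_sum_le _ _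
    _ = #s := by simp [norm_zpow, hx]

lemma card_filter_snd_one_add_zero_add_neg_one_le (S : Finset (ℤ × ℤ)) :
    (#{p ∈ S | p.2 = 1} + #{p ∈ S | p.2 = 0} + #{p ∈ S | p.2 = -1} : ℝ) ≤ #S := by
  have h := sum_card_fiberwise_eq_card_filter S {1, 0, -1} Prod.snd
  rw [sum_insert (by decide), sum_pair (by decide)] at h
  have := h ▸ card_filter_le S _
  exact_mod_cast (add_assoc _ _ _).trans_le this

lemma kernel_add_self_eq_sum (S : Finset (ℤ × ℤ)) (x z Y : ℂ) :
    apoly S x z * Y ^ 2 + bpoly S x z * Y + cpoly S x z + Y =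
      z * ((∑ p ∈ S with p.2 = 1, x ^ (p.1 + 1)) * Y ^ 2 +
        (∑ p ∈ S with p.2 = 0, x ^ (p.1 + 1)) * Y + ∑ p ∈ S with p.2 = -1, x ^ (p.1 + 1)) := by
  unfold apoly bpoly cpoly; ring

lemma norm_kernel_add_self_le (S : Finset (ℤ × ℤ)) {x Y : ℂ} (hx : ‖x‖ = 1) (hY : ‖Y‖ = 1)
    {z : ℝ} (hz : 0 ≤ z) :
    ‖apoly S x z * Y ^ 2 + bpoly S x z * Y + cpoly S x z + Y‖ ≤ z * #S := by
  rw [kernel_add_self_eq_sum, norm_mul, norm_real, Real.norm_of_nonneg hz]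
  gcongr
  calc _ ≤ ‖(∑ p ∈ S with p.2 = 1, x ^ (p.1 + 1)) * Y ^ 2‖ +
        ‖(∑ p ∈ S with p.2 = 0, x ^ (p.1 + 1)) * Y‖ + ‖∑ p ∈ S with p.2 = -1, x ^ (p.1 + 1)‖ :=
        norm_add₃_le
    _ ≤ _ := by
      simp only [norm_mul, norm_pow, hY, one_pow, mul_one]
      grw [norm_sum_zpow_le_card _ _ hx, norm_sum_zpow_le_card _ _ hx,
        norm_sum_zpow_le_card _ _ hx]
      exact card_filter_snd_one_add_zero_add_neg_one_le S

lemma re_inv_neg_of_norm_add_one_lt {w : ℂ} (h : ‖w + 1‖ < 1) : (w⁻¹).re < 0 := by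
  have hre : w.re < 0 := by
    have := re_le_norm (w + 1)
    simp only [add_re, one_re] at this
    linarith
  rw [inv_re]
  exact div_neg_of_neg_of_pos hre (normSq_pos.2 fun h0 => by simp [h0] at hre)

lemma exists_mem_ball_eq_zero_of_norm_add_id_lt {P : ℂ → ℂ}
    (hP : DifferentiableOn ℂ P (closedBall 0 1)) (h : ∀ Y ∈ sphere (0 : ℂ) 1, ‖P Y + Y‖ < 1) :
    ∃ Y ∈ ball (0 : ℂ) 1, P Y = 0 := by
  by_contra! hne
  have hP0 : ∀ Y ∈ closedBall (0 : ℂ) 1, P Y ≠ 0 := by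
    intro Y hY hY0
    rcases (mem_closedBall.1 hY).lt_or_eq with hlt | heq
    · exact hne Y (mem_ball.2 hlt) hY0
    · simpa [hY0, ← dist_zero_right, heq] using h Y (mem_sphere.2 heq)
  set u : ℂ → ℂ := fun Y => Y / P Y
  have hu : DifferentiableOn ℂ u (closedBall 0 1) := differentiableOn_id.div hP hP0
  have hu_re : ∀ Y ∈ sphere (0 : ℂ) 1, (u Y).re < 0 := by
    intro Y hY
    have hY0 : Y ≠ 0 := ne_zero_of_mem_sphere one_ne_zero ⟨Y, hY⟩
    have hnorm : ‖Y‖ = 1 := by simpa using hY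
    have : u Y = (P Y / Y)⁻¹ := (inv_div _ _).symm
    rw [this]
    apply re_inv_neg_of_norm_add_one_lt
    rw [div_add_one hY0, norm_div, hnorm, div_one]
    exact h Y hY
  obtain ⟨Y₀, hY₀, hmax⟩ := (isCompact_sphere (0 : ℂ) 1).exists_isMaxOn
    (NormedSpace.sphere_nonempty.2 zero_le_one)
    (continuous_re.comp_continuousOn (hu.continuousOn.mono sphere_subset_closedBall))
  have hdiff : DiffContOnCl ℂ (fun Y => exp (u Y)) (ball 0 1) := by
    apply DifferentiableOn.diffContOnCl
    rw [closure_ball _ one_ne_zero]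
    exact hu.cexp
  have hle := norm_le_of_forall_mem_frontier_norm_le isBounded_ball hdiff
    (C := Real.exp (u Y₀).re) (z := 0) (by
      rw [frontier_ball _ one_ne_zero]
      intro Y hY
      rw [norm_exp, Real.exp_le_exp]
      exact hmax hY)
    (subset_closure (mem_ball_self one_pos))
  have hlt : Real.exp (u Y₀).re < 1 := Real.exp_lt_one_iff.2 (hu_re Y₀ hY₀)
  simp only [u, zero_div, Complex.exp_zero, norm_one] at hle
  exact hle.not_gt hlt

theorem roots_of_kernel_on_unit_circle_general (S : Finset (ℤ × ℤ))
    (z : ℝ) (hz0 : 0 < z) (hz1 : z < 1 / (S.card : ℝ))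
    (x : ℂ) (hx : ‖x‖ = 1) (ha : apoly S x (z : ℂ) ≠ 0)
    (y₀ y₁ : ℂ)
    (hroots : ∀ Y : ℂ,
      apoly S x (z : ℂ) * Y ^ 2 + bpoly S x (z : ℂ) * Y + cpoly S x (z : ℂ) =
        apoly S x (z : ℂ) * (Y - y₀) * (Y - y₁)) :
    min ‖y₀‖ ‖y₁‖ < 1 ∧
      ‖y₀‖ ≠ 1 ∧ ‖y₁‖ ≠ 1 := by
  set K : ℂ → ℂ := fun Y => apoly S x z * Y ^ 2 + bpoly S x z * Y + cpoly S x z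
  have hzS : z * #S < 1 := by
    rcases eq_or_ne #S 0 with hS | hS
    · simp [hS]
    · rwa [lt_div_iff₀ (by positivity)] at hz1
  have hK : ∀ Y ∈ sphere (0 : ℂ) 1, ‖K Y + Y‖ < 1 := fun Y hY =>
    (norm_kernel_add_self_le S hx (by simpa using hY) hz0.le).trans_lt hzS
  have hK_zero : ∀ Y, K Y = 0 ↔ Y = y₀ ∨ Y = y₁ := fun Y => by
    simp [K, hroots, ha, sub_eq_zero]
  have hnorm_ne : ∀ Y, K Y = 0 → ‖Y‖ ≠ 1 := fun Y hY h1 => by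
    simpa [hY, h1] using hK Y (by simpa using h1)
  obtain ⟨Y, hY, hKY⟩ := exists_mem_ball_eq_zero_of_norm_add_id_lt (by fun_prop) hK
  refine ⟨?_, hnorm_ne y₀ ((hK_zero _).2 (.inl rfl)), hnorm_ne y₁ ((hK_zero _).2 (.inr rfl))⟩
  rw [mem_ball_zero_iff] at hY
  rcases (hK_zero Y).1 hKY with rfl | rfl
  · exact (min_le_left _ _).trans_lt hY
  · exact (min_le_right _ _).trans_lt hY

/-- For a non-singular walk, `0 < z < 1/k` real and `|x| = 1`, the two `y`-roots of the
kernel satisfy `min(|y₀|,|y₁|) < 1`, and neither root has modulus one. -/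
theorem roots_of_kernel_on_unit_circle (S : Finset (ℤ × ℤ))
    (hS : S ⊆ ({-1, 0, 1} ×ˢ {-1, 0, 1} : Finset (ℤ × ℤ)) \ {((0 : ℤ), (0 : ℤ))})
    (hk : 1 ≤ S.card) (hns : ¬ IsSingular S)
    (z : ℝ) (hz0 : 0 < z) (hz1 : z < 1 / (S.card : ℝ))
    (x : ℂ) (hx : ‖x‖ = 1) (ha : apoly S x (z : ℂ) ≠ 0)
    (y₀ y₁ : ℂ)
    (hroots : ∀ Y : ℂ,
      apoly S x (z : ℂ) * Y ^ 2 + bpoly S x (z : ℂ) * Y + cpoly S x (z : ℂ) =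
        apoly S x (z : ℂ) * (Y - y₀) * (Y - y₁)) :
    min ‖y₀‖ ‖y₁‖ < 1 ∧
      ‖y₀‖ ≠ 1 ∧ ‖y₁‖ ≠ 1 :=
  roots_of_kernel_on_unit_circle_general S z hz0 hz1 x hx ha y₀ y₁ hroots
end

section
/- For every complex x, y, z with |x| ≤ 1, |y| ≤ 1, |z| < 1/k and K(x,y;z) = 0, one has c(x;z)·Q(x,0;z) + c̃(y;z)·Q(0,y;z) − z·δ·Q(0,0;z) = x·y. -/
/-- Number of walks of length `n` in the quarter plane, starting at `(0,0)`,
ending at `(i,j)`, with steps in `S`. -/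
def walkCount (S : Finset (ℤ × ℤ)) (i j : ℤ) (n : ℕ) : ℕ :=
  Finset.card (Finset.univ.filter (fun s : Fin n → {p : ℤ × ℤ // p ∈ S} =>
    (∀ l : Fin n,
        0 ≤ (∑ m ∈ Finset.univ.filter (fun m => m ≤ l), ((s m : ℤ × ℤ)).1) ∧
        0 ≤ (∑ m ∈ Finset.univ.filter (fun m => m ≤ l), ((s m : ℤ × ℤ)).2)) ∧
    (∑ m : Fin n, (s m : ℤ × ℤ)) = (i, j)))

/-- The trivariate generating function `Q(x,y;z)` of the walks. -/
noncomputable def genF (S : Finset (ℤ × ℤ)) (x y z : ℂ) : ℂ :=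
  ∑' p : ℕ × ℕ × ℕ,
    (walkCount S (p.1 : ℤ) (p.2.1 : ℤ) p.2.2 : ℂ) * x ^ p.1 * y ^ p.2.1 * z ^ p.2.2

/-- The kernel `K(x,y;z) = z·Σ_{(i,j)∈S} x^{i+1} y^{j+1} − x y`. -/
noncomputable def kernel (S : Finset (ℤ × ℤ)) (x y z : ℂ) : ℂ :=
  z * ∑ p ∈ S, x ^ (p.1 + 1) * y ^ (p.2 + 1) - x * y

/-- `c̃(y;z) = z·Σ_{(−1,j)∈S} y^{j+1}`. -/
noncomputable def ctpoly (S : Finset (ℤ × ℤ)) (y z : ℂ) : ℂ :=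
  z * ∑ p ∈ S.filter (fun p => p.1 = -1), y ^ (p.2 + 1)

/-- `δ = 1` if `(−1,−1) ∈ S`, `0` otherwise. -/
def delta (S : Finset (ℤ × ℤ)) : ℂ :=
  if ((-1, -1) : ℤ × ℤ) ∈ S then 1 else 0

/-!
Write `Q_n(x, y)` for the sum of `x^i y^j` over the quadrant walks of length `n`, ending at
`(i, j)`, so that `Q = ∑ₙ Q_n zⁿ`. Splitting off the last step of a walk gives
`x y Q_{n+1}(x, y) = P(x, y) Q_n(x, y) - c̃(y) Q_n(0, y) - c(x) Q_n(x, 0) + δ Q_n(0, 0)`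
with `P(x, y) = ∑_{s ∈ S} x^{s₁+1} y^{s₂+1}`: the subtracted terms are the steps that would
leave the quadrant through one of the axes, and `δ` corrects for the corner, counted twice.
There are at most `kⁿ` walks of length `n`, so everything converges absolutely for `|z| < 1/k`;
multiplying by `z^{n+1}` and summing over `n` gives
`x y (Q - 1) = (K + x y) Q - c̃ Q(0, y) - c Q(x, 0) + z δ Q(0, 0)`, which is the claim when `K = 0`.
-/

open Finset

/-- `0 ^ i` is the indicator of `i = 0`, the only point from which the step `a = -1` leaves `ℕ`. -/
theorem ite_nonneg_add_mul_pow_toNat {𝕜 : Type*} [Field 𝕜] (x : 𝕜) {i a : ℤ} (hi : 0 ≤ i)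
    (ha : -1 ≤ a) :
    (if 0 ≤ i + a then x * x ^ (i + a).toNat else 0) =
      x ^ (a + 1) * x ^ i.toNat - (if a = -1 then 1 else 0) * 0 ^ i.toNat := by
  lift i to ℕ using hi
  by_cases h : a = -1
  · subst h
    cases i with
    | zero => simp
    | succ i => simp [pow_succ, mul_comm]
  · lift a to ℕ using (by omega)
    have htoNat : ((i : ℤ) + a).toNat = a + i := by omega
    rw [if_pos (by positivity), htoNat, if_neg h, ← Nat.cast_succ, zpow_natCast,
      Int.toNat_natCast, zero_mul, sub_zero, pow_succ, pow_add]
    ring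

theorem ite_nonneg_add_mul_monomial {𝕜 : Type*} [Field 𝕜] (x y : 𝕜) {e a : ℤ × ℤ} (he : 0 ≤ e)
    (ha : -1 ≤ a) :
    (if 0 ≤ e + a then x * y * (x ^ (e + a).1.toNat * y ^ (e + a).2.toNat) else 0) =
      (x ^ (a.1 + 1) * x ^ e.1.toNat - (if a.1 = -1 then 1 else 0) * 0 ^ e.1.toNat) *
        (y ^ (a.2 + 1) * y ^ e.2.toNat - (if a.2 = -1 then 1 else 0) * 0 ^ e.2.toNat) := by
  rw [Prod.le_def] at he ha
  rw [← ite_nonneg_add_mul_pow_toNat x he.1 ha.1, ← ite_nonneg_add_mul_pow_toNat y he.2 ha.2,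
    ite_zero_mul_ite_zero]
  simp only [Prod.le_def, Prod.fst_zero, Prod.snd_zero, Prod.fst_add, Prod.snd_add]
  split_ifs <;> ring

namespace QuadrantWalk

variable {S : Finset (ℤ × ℤ)} {n : ℕ}

def endpoint (s : Fin n → S) : ℤ × ℤ := ∑ m, (s m : ℤ × ℤ)

variable (S n) in
def quadrantWalks : Finset (Fin n → S) :=
  {s | ∀ l : Fin n, 0 ≤ ∑ m ∈ Iic l, (s m : ℤ × ℤ)}

theorem walkCount_eq_card (i j : ℤ) :
    walkCount S i j n = #{s ∈ quadrantWalks S n | endpoint s = (i, j)} := by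
  unfold walkCount quadrantWalks endpoint
  rw [filter_filter]
  congr! with s
  simp [Prod.le_def, filter_ge_eq_Iic, Prod.fst_sum, Prod.snd_sum]

theorem endpoint_snoc (t : Fin n → S) (a : S) :
    endpoint (Fin.snoc t a : Fin (n + 1) → S) = endpoint t + a := by
  simp [endpoint, Fin.sum_univ_castSucc]

theorem snoc_mem_quadrantWalks {t : Fin n → S} {a : S} :
    Fin.snoc t a ∈ quadrantWalks S (n + 1) ↔ t ∈ quadrantWalks S n ∧ 0 ≤ endpoint t + a := by
  simp only [quadrantWalks, mem_filter, mem_univ, true_and, Fin.forall_fin_succ',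
    ← Fin.map_castSuccEmb_Iic, sum_map, ← Fin.top_eq_last, Iic_top, ← endpoint_snoc]
  simp [endpoint]

theorem endpoint_nonneg {s : Fin n → S} (hs : s ∈ quadrantWalks S n) : 0 ≤ endpoint s := by
  cases n with
  | zero => simp [endpoint]
  | succ n =>
    simpa [quadrantWalks, endpoint, ← Fin.top_eq_last] using (mem_filter.mp hs).2 (Fin.last n)

theorem sum_quadrantWalks_succ {M : Type*} [AddCommMonoid M] (f : (Fin (n + 1) → S) → M) :
    ∑ s ∈ quadrantWalks S (n + 1), f s =
      ∑ t ∈ quadrantWalks S n, ∑ a : S, if 0 ≤ endpoint t + a then f (Fin.snoc t a) else 0 := by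
  rw [← univ_inter (quadrantWalks S (n + 1)), ← sum_ite_mem, ← (Fin.snocEquiv fun _ => S).sum_comp,
    Fintype.sum_prod_type_right, ← univ_inter (quadrantWalks S n), ← sum_ite_mem]
  refine sum_congr rfl fun t _ => ?_
  by_cases ht : t ∈ quadrantWalks S n <;> simp [Fin.snocEquiv, snoc_mem_quadrantWalks, ht]

def walkPoly {R : Type*} [CommSemiring R] (S : Finset (ℤ × ℤ)) (n : ℕ) (x y : R) : R :=
  ∑ s ∈ quadrantWalks S n, x ^ (endpoint s).1.toNat * y ^ (endpoint s).2.toNat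

theorem mul_walkPoly_succ {𝕜 : Type*} [Field 𝕜] (hS : ∀ p ∈ S, -1 ≤ p) (x y : 𝕜) :
    x * y * walkPoly S (n + 1) x y =
      (∑ p ∈ S, x ^ (p.1 + 1) * y ^ (p.2 + 1)) * walkPoly S n x y
        - (∑ p ∈ S with p.1 = -1, y ^ (p.2 + 1)) * walkPoly S n 0 y
        - (∑ p ∈ S with p.2 = -1, x ^ (p.1 + 1)) * walkPoly S n x 0
        + (if ((-1, -1) : ℤ × ℤ) ∈ S then 1 else 0) * walkPoly S n 0 0 := by
  have hexpand : ∀ a : S, ∑ t ∈ quadrantWalks S n,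
      (x ^ (a.1.1 + 1) * x ^ (endpoint t).1.toNat
          - (if a.1.1 = -1 then 1 else 0) * 0 ^ (endpoint t).1.toNat) *
        (y ^ (a.1.2 + 1) * y ^ (endpoint t).2.toNat
          - (if a.1.2 = -1 then 1 else 0) * 0 ^ (endpoint t).2.toNat) =
      x ^ (a.1.1 + 1) * y ^ (a.1.2 + 1) * walkPoly S n x y
        - (if a.1.1 = -1 then 1 else 0) * y ^ (a.1.2 + 1) * walkPoly S n 0 y
        - (if a.1.2 = -1 then 1 else 0) * x ^ (a.1.1 + 1) * walkPoly S n x 0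
        + (if a.1.1 = -1 then 1 else 0) * (if a.1.2 = -1 then 1 else 0) * walkPoly S n 0 0 := by
    intro a
    simp only [walkPoly, mul_sum, ← sum_sub_distrib, ← sum_add_distrib]
    exact sum_congr rfl fun t _ => by ring
  have hcorner : ∑ a : S, (if a.1.1 = -1 then (1 : 𝕜) else 0) * (if a.1.2 = -1 then 1 else 0) =
      if ((-1, -1) : ℤ × ℤ) ∈ S then 1 else 0 := by
    have hpair (p : ℤ × ℤ) : (p.1 = -1 ∧ p.2 = -1) ↔ p = (-1, -1) := by simp [Prod.ext_iff]
    rw [sum_coe_sort S fun p => (if p.1 = -1 then (1 : 𝕜) else 0) * (if p.2 = -1 then 1 else 0)]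
    simp only [ite_zero_mul_ite_zero, mul_one, hpair, sum_ite_eq']
  rw [walkPoly, mul_sum, sum_quadrantWalks_succ]
  simp only [endpoint_snoc]
  rw [sum_congr rfl fun t ht => sum_congr rfl fun (a : S) _ =>
      ite_nonneg_add_mul_monomial x y (endpoint_nonneg ht) (hS a a.2), sum_comm,
    sum_congr rfl fun a _ => hexpand a]
  simp only [sum_add_distrib, sum_sub_distrib, ← sum_mul]
  rw [hcorner]
  simp only [boole_mul, sum_filter, ← sum_coe_sort S]

theorem walkPoly_zero {R : Type*} [CommSemiring R] (x y : R) : walkPoly S 0 x y = 1 := by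
  simp [walkPoly, quadrantWalks, endpoint]

theorem card_quadrantWalks_le : #(quadrantWalks S n) ≤ #S ^ n :=
  (card_filter_le _ _).trans (by simp)

theorem hasSum_walkCount_smul {M : Type*} [AddCommMonoid M] [TopologicalSpace M]
    (g : ℕ × ℕ → M) :
    HasSum (fun p : ℕ × ℕ => walkCount S p.1 p.2 n • g p)
      (∑ s ∈ quadrantWalks S n, g ((endpoint s).1.toNat, (endpoint s).2.toNat)) := by
  set e : (Fin n → S) → ℕ × ℕ := fun s => ((endpoint s).1.toNat, (endpoint s).2.toNat)
  have hcount (p : ℕ × ℕ) : walkCount S p.1 p.2 n = #{s ∈ quadrantWalks S n | e s = p} := by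
    rw [walkCount_eq_card]
    refine congrArg card (filter_congr fun s hs => ?_)
    have := endpoint_nonneg hs
    simp only [Prod.le_def, Prod.fst_zero, Prod.snd_zero] at this
    simp only [e, Prod.ext_iff]
    omega
  have hsupp : ∀ p ∉ (quadrantWalks S n).image e, walkCount S p.1 p.2 n • g p = 0 := by
    intro p hp
    rw [hcount, card_eq_zero.mpr (filter_eq_empty_iff.mpr fun s hs he => hp ?_), zero_smul]
    exact mem_image.mpr ⟨s, hs, he⟩
  have hfiber : ∑ s ∈ quadrantWalks S n, g (e s) =
      ∑ p ∈ (quadrantWalks S n).image e, walkCount S p.1 p.2 n • g p := by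
    simp only [sum_comp g e, hcount]
  rw [hfiber]
  exact hasSum_sum_of_ne_finset_zero hsupp

theorem hasSum_walkPoly_mul_pow {x y z : ℂ} (hx : ‖x‖ ≤ 1) (hy : ‖y‖ ≤ 1) (hz : #S * ‖z‖ < 1) :
    HasSum (fun n => walkPoly S n x y * z ^ n) (genF S x y z) := by
  set F : ℕ × ℕ × ℕ → ℂ :=
    fun q => (walkCount S q.2.1 q.2.2 q.1 : ℂ) * x ^ q.2.1 * y ^ q.2.2 * z ^ q.1
  have hF : Summable F := by
    refine Summable.of_norm_bounded (g := fun q => walkCount S q.2.1 q.2.2 q.1 • ‖z‖ ^ q.1) ?_ ?_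
    · refine (summable_prod_of_nonneg fun _ => by positivity).mpr
        ⟨fun n => (hasSum_walkCount_smul _).summable, ?_⟩
      refine (summable_geometric_of_lt_one (by positivity) hz).of_nonneg_of_le
        (fun _ => tsum_nonneg fun _ => by positivity) fun n => ?_
      rw [(hasSum_walkCount_smul fun _ => ‖z‖ ^ n).tsum_eq, sum_const, nsmul_eq_mul, mul_pow]
      gcongr
      exact_mod_cast card_quadrantWalks_le
    · intro q
      simp only [F, norm_mul, norm_pow, Complex.norm_natCast, nsmul_eq_mul]
      have hxq := pow_le_one₀ (norm_nonneg x) hx (n := q.2.1)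
      have hyq := pow_le_one₀ (norm_nonneg y) hy (n := q.2.2)
      calc _ ≤ (walkCount S q.2.1 q.2.2 q.1 : ℝ) * 1 * 1 * ‖z‖ ^ q.1 := by gcongr
        _ = _ := by ring
  have hgen : HasSum F (genF S x y z) := by
    rw [genF, ← ((Equiv.prodComm ℕ (ℕ × ℕ)).trans (Equiv.prodAssoc ℕ ℕ ℕ)).tsum_eq]
    exact hF.hasSum
  refine hgen.prod_fiberwise fun n => ?_
  convert hasSum_walkCount_smul (S := S) (n := n) fun p => x ^ p.1 * y ^ p.2 * z ^ n using 1
  · simp only [F, nsmul_eq_mul, mul_assoc]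
  · simp only [walkPoly, sum_mul]

end QuadrantWalk

open QuadrantWalk

theorem functional_equation_on_kernel_zero_general (S : Finset (ℤ × ℤ))
    (hS : S ⊆ ({-1, 0, 1} ×ˢ {-1, 0, 1} : Finset (ℤ × ℤ)) \ {((0 : ℤ), (0 : ℤ))})
    (x y z : ℂ) (hx : ‖x‖ ≤ 1) (hy : ‖y‖ ≤ 1)
    (hz : ‖z‖ < 1 / (S.card : ℝ))
    (hker : kernel S x y z = 0) :
    cpoly S x z * genF S x 0 z + ctpoly S y z * genF S 0 y z
      - z * delta S * genF S 0 0 z = x * y := by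
  have hstep : ∀ p ∈ S, -1 ≤ p := fun p hp => by
    have := hS hp
    simp only [mem_sdiff, mem_product, mem_insert, mem_singleton] at this
    simp only [Prod.le_def, Prod.fst_neg, Prod.snd_neg, Prod.fst_one, Prod.snd_one]
    omega
  have hz' : #S * ‖z‖ < 1 := by
    rcases (Nat.cast_nonneg #S : (0 : ℝ) ≤ #S).eq_or_lt with h | h
    · rw [← h, zero_mul]
      exact one_pos
    · rwa [mul_comm, ← lt_div_iff₀ h]
  have h0 : ‖(0 : ℂ)‖ ≤ 1 := by simp
  have hrec (n : ℕ) : x * y * (walkPoly S (n + 1) x y * z ^ (n + 1)) =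
      (kernel S x y z + x * y) * (walkPoly S n x y * z ^ n)
        - ctpoly S y z * (walkPoly S n 0 y * z ^ n) - cpoly S x z * (walkPoly S n x 0 * z ^ n)
        + z * delta S * (walkPoly S n 0 0 * z ^ n) := by
    rw [kernel, ctpoly, cpoly, delta]
    linear_combination z ^ (n + 1) * mul_walkPoly_succ (n := n) hstep x y
  have hshift := ((hasSum_nat_add_iff' 1).mpr (hasSum_walkPoly_mul_pow hx hy hz')).mul_left (x * y)
  simp only [sum_range_one, walkPoly_zero, pow_zero, mul_one] at hshift
  have hsum := ((((hasSum_walkPoly_mul_pow hx hy hz').mul_left (kernel S x y z + x * y)).sub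
    ((hasSum_walkPoly_mul_pow h0 hy hz').mul_left (ctpoly S y z))).sub
    ((hasSum_walkPoly_mul_pow hx h0 hz').mul_left (cpoly S x z))).add
    ((hasSum_walkPoly_mul_pow h0 h0 hz').mul_left (z * delta S))
  simp only [← hrec] at hsum
  rw [hker] at hsum
  linear_combination hshift.unique hsum

/-- Evaluating the functional equation on the zero set of the kernel. -/
theorem functional_equation_on_kernel_zero (S : Finset (ℤ × ℤ))
    (hS : S ⊆ ({-1, 0, 1} ×ˢ {-1, 0, 1} : Finset (ℤ × ℤ)) \ {((0 : ℤ), (0 : ℤ))})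
    (hk : 1 ≤ S.card)
    (x y z : ℂ) (hx : ‖x‖ ≤ 1) (hy : ‖y‖ ≤ 1)
    (hz : ‖z‖ < 1 / (S.card : ℝ))
    (hker : kernel S x y z = 0) :
    cpoly S x z * genF S x 0 z + ctpoly S y z * genF S 0 y z
      - z * delta S * genF S 0 0 z = x * y :=
  functional_equation_on_kernel_zero_general S hS x y z hx hy hz hker
end

section
/- For every complex x, x′, y, z with |x| ≤ 1, |x′| ≤ 1, |y| ≤ 1, |z| < 1/k, K(x,y;z) = 0 and K(x′,y;z) = 0, one has c(x′;z)·Q(x′,0;z) − c(x;z)·Q(x,0;z) = (x′ − x)·y. -/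
namespace QuarterWalk

open Finset

variable (S : Finset (ℤ × ℤ))

def quarterWalks (n : ℕ) : Finset (Fin n → S) :=
  univ.filter fun w => ∀ l, 0 ≤ ∑ m ∈ univ.filter (· ≤ l), (w m : ℤ × ℤ)

variable {S}

def endpoint {n : ℕ} (w : Fin n → S) : ℤ × ℤ :=
  ∑ m, (w m : ℤ × ℤ)

lemma walkCount_eq_card (i j : ℤ) (n : ℕ) :
    walkCount S i j n = #{w ∈ quarterWalks S n | endpoint w = (i, j)} := by
  simp only [walkCount, quarterWalks, endpoint, filter_filter, Prod.le_def, Prod.fst_zero,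
    Prod.snd_zero, Prod.fst_sum, Prod.snd_sum]

lemma zero_le_endpoint {n : ℕ} {w : Fin n → S} (hw : w ∈ quarterWalks S n) :
    0 ≤ endpoint w := by
  cases n with
  | zero => simp [endpoint]
  | succ n =>
    have := (mem_filter.mp hw).2 (Fin.last n)
    simpa [Fin.le_last, endpoint] using this

lemma endpoint_snoc {n : ℕ} (w : Fin n → S) (s : S) :
    endpoint (Fin.snoc w s : Fin (n + 1) → S) = endpoint w + s := by
  simp [endpoint, Fin.sum_univ_castSucc]

lemma sum_filter_le_castSucc {M : Type*} [AddCommMonoid M] {n : ℕ} (f : Fin (n + 1) → M)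
    (l : Fin n) :
    ∑ m ∈ univ.filter (· ≤ l.castSucc), f m = ∑ m ∈ univ.filter (· ≤ l), f m.castSucc := by
  rw [sum_filter, sum_filter, Fin.sum_univ_castSucc, if_neg (Fin.castSucc_lt_last l).not_ge,
    add_zero]
  simp only [Fin.castSucc_le_castSucc_iff]

lemma snoc_mem_quarterWalks_iff {n : ℕ} (w : Fin n → S) (s : S) :
    (Fin.snoc w s : Fin (n + 1) → S) ∈ quarterWalks S (n + 1) ↔
      w ∈ quarterWalks S n ∧ 0 ≤ endpoint w + s := by
  simp only [quarterWalks, mem_filter, mem_univ, true_and, Fin.forall_fin_succ',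
    sum_filter_le_castSucc, Fin.snoc_castSucc, ← endpoint_snoc]
  simp [endpoint, Fin.le_last]

lemma sum_quarterWalks_succ {M : Type*} [AddCommMonoid M] (F : ℤ × ℤ → M) (n : ℕ) :
    ∑ w ∈ quarterWalks S (n + 1), F (endpoint w) =
      ∑ w ∈ quarterWalks S n, ∑ s ∈ S, if 0 ≤ endpoint w + s then F (endpoint w + s) else 0 := by
  classical
  rw [← Fintype.sum_ite_mem (quarterWalks S (n + 1)),
    ← (Fin.snocEquiv fun _ => S).sum_comp, Fintype.sum_prod_type, sum_comm,
    ← Fintype.sum_ite_mem (quarterWalks S n)]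
  refine Fintype.sum_congr _ _ fun w => ?_
  have hsnoc : ∀ s, (Fin.snocEquiv fun _ => S) (s, w) = Fin.snoc w s := fun _ => rfl
  rw [← sum_coe_sort S]
  split_ifs with hw <;>
    simp [hsnoc, snoc_mem_quarterWalks_iff, endpoint_snoc, hw]

section WalkPoly

variable {K : Type*} [Field K] (S)

def walkPoly (n : ℕ) (x y : K) : K :=
  ∑ w ∈ quarterWalks S n, x ^ (endpoint w).1 * y ^ (endpoint w).2

def stepPoly (x y : K) : K :=
  ∑ s ∈ S, x ^ (s.1 + 1) * y ^ (s.2 + 1)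

lemma walkPoly_zero (x y : K) : walkPoly S 0 x y = 1 := by
  simp [walkPoly, quarterWalks, endpoint]

/-- The factor `0 ^ e * 0 ^ (s + 1)` is the indicator of the forbidden move `e = 0, s = -1`. -/
lemma ite_zpow_eq_sub (x : K) {e s : ℤ} (he : 0 ≤ e) (hs : -1 ≤ s) :
    (if 0 ≤ e + s then x ^ (e + s + 1) else 0) = x ^ e * x ^ (s + 1) - 0 ^ e * 0 ^ (s + 1) := by
  split_ifs with h
  · have hne : e + (s + 1) ≠ 0 := by omega
    rw [← zpow_add' (Or.inr (Or.inl hne)), ← zpow_add' (Or.inr (Or.inl hne)), zero_zpow _ hne,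
      sub_zero, add_assoc]
  · obtain ⟨rfl, rfl⟩ : e = 0 ∧ s = -1 := by omega
    simp

lemma walkPoly_mul_stepPoly (n : ℕ) (x y : K) :
    walkPoly S n x y * stepPoly S x y = ∑ w ∈ quarterWalks S n, ∑ s ∈ S,
      x ^ (endpoint w).1 * x ^ (s.1 + 1) * (y ^ (endpoint w).2 * y ^ (s.2 + 1)) := by
  rw [walkPoly, stepPoly, sum_mul_sum]
  exact sum_congr rfl fun _ _ => sum_congr rfl fun _ _ => by ring

variable {S}

/-- Inclusion–exclusion over the two ways a step can leave the quarter plane. -/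
lemma walkPoly_succ (hS : ∀ s ∈ S, -1 ≤ s.1 ∧ -1 ≤ s.2) (n : ℕ) (x y : K) :
    x * y * walkPoly S (n + 1) x y =
      walkPoly S n x y * stepPoly S x y - walkPoly S n 0 y * stepPoly S 0 y
        - walkPoly S n x 0 * stepPoly S x 0 + walkPoly S n 0 0 * stepPoly S 0 0 := by
  have hshift : x * y * walkPoly S (n + 1) x y =
      ∑ w ∈ quarterWalks S (n + 1), x ^ ((endpoint w).1 + 1) * y ^ ((endpoint w).2 + 1) := by
    rw [walkPoly, mul_sum]
    refine sum_congr rfl fun w hw => ?_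
    have he : 0 ≤ (endpoint w).1 ∧ 0 ≤ (endpoint w).2 := zero_le_endpoint hw
    rw [zpow_add' (Or.inr (Or.inl (by omega))), zpow_add' (Or.inr (Or.inl (by omega))),
      zpow_one, zpow_one]
    ring
  rw [hshift, sum_quarterWalks_succ (fun p => x ^ (p.1 + 1) * y ^ (p.2 + 1)),
    walkPoly_mul_stepPoly, walkPoly_mul_stepPoly, walkPoly_mul_stepPoly, walkPoly_mul_stepPoly,
    ← sum_sub_distrib, ← sum_sub_distrib, ← sum_add_distrib]
  refine sum_congr rfl fun w hw => ?_
  rw [← sum_sub_distrib, ← sum_sub_distrib, ← sum_add_distrib]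
  refine sum_congr rfl fun s hs => ?_
  have he : 0 ≤ (endpoint w).1 ∧ 0 ≤ (endpoint w).2 := zero_le_endpoint hw
  simp only [Prod.le_def, Prod.fst_zero, Prod.snd_zero, Prod.fst_add, Prod.snd_add,
    ← ite_zero_mul_ite_zero]
  rw [ite_zpow_eq_sub x he.1 (hS s hs).1, ite_zpow_eq_sub y he.2 (hS s hs).2]
  ring

end WalkPoly

lemma card_quarterWalks_le (n : ℕ) : #(quarterWalks S n) ≤ S.card ^ n :=
  (card_filter_le _ _).trans (by simp)

lemma toNat_endpoint_eq_iff {n : ℕ} {w : Fin n → S} (hw : w ∈ quarterWalks S n) (ij : ℕ × ℕ) :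
    ((endpoint w).1.toNat, (endpoint w).2.toNat) = ij ↔
      endpoint w = ((ij.1 : ℤ), (ij.2 : ℤ)) := by
  have he : 0 ≤ (endpoint w).1 ∧ 0 ≤ (endpoint w).2 := zero_le_endpoint hw
  simp only [Prod.ext_iff]
  omega

lemma hasSum_walkCount_mul {R : Type*} [Semiring R] [TopologicalSpace R] (n : ℕ)
    (g : ℤ × ℤ → R) :
    HasSum (fun ij : ℕ × ℕ => (walkCount S ij.1 ij.2 n : R) * g ((ij.1 : ℤ), (ij.2 : ℤ)))
      (∑ w ∈ quarterWalks S n, g (endpoint w)) := by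
  set t : (Fin n → S) → ℕ × ℕ := fun w => ((endpoint w).1.toNat, (endpoint w).2.toNat)
  have hfiber : ∀ ij : ℕ × ℕ, {w ∈ quarterWalks S n | endpoint w = ((ij.1 : ℤ), (ij.2 : ℤ))} =
      {w ∈ quarterWalks S n | t w = ij} :=
    fun ij => filter_congr fun w hw => (toNat_endpoint_eq_iff hw ij).symm
  have hterm : ∀ ij : ℕ × ℕ, (walkCount S ij.1 ij.2 n : R) * g ((ij.1 : ℤ), (ij.2 : ℤ)) =
      ∑ w ∈ quarterWalks S n with t w = ij, g (endpoint w) := by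
    intro ij
    rw [walkCount_eq_card, hfiber, sum_congr rfl fun w hw => by
      rw [(toNat_endpoint_eq_iff (mem_filter.mp hw).1 ij).mp (mem_filter.mp hw).2],
      sum_const, nsmul_eq_mul]
  have hvanish : ∀ ij ∉ (quarterWalks S n).image t,
      (walkCount S ij.1 ij.2 n : R) * g ((ij.1 : ℤ), (ij.2 : ℤ)) = 0 := fun ij hij => by
    rw [hterm]
    exact sum_eq_zero fun w hw => absurd (mem_image.mpr ⟨w, (mem_filter.mp hw).1,
      (mem_filter.mp hw).2⟩) hij
  rw [← sum_fiberwise_of_maps_to fun w hw => mem_image_of_mem t hw,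
    ← sum_congr rfl fun ij _ => hterm ij]
  exact hasSum_sum_of_ne_finset_zero hvanish

lemma norm_genF_term_le {x y z : ℂ} (hx : ‖x‖ ≤ 1) (hy : ‖y‖ ≤ 1) (i j n : ℕ) :
    ‖(walkCount S i j n : ℂ) * x ^ i * y ^ j * z ^ n‖ ≤ (walkCount S i j n : ℝ) * ‖z‖ ^ n := by
  rw [norm_mul, norm_mul, norm_mul, Complex.norm_natCast, norm_pow, norm_pow, norm_pow]
  calc (walkCount S i j n : ℝ) * ‖x‖ ^ i * ‖y‖ ^ j * ‖z‖ ^ n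
      ≤ walkCount S i j n * 1 * 1 * ‖z‖ ^ n := by
        gcongr
        · exact pow_le_one₀ (norm_nonneg x) hx
        · exact pow_le_one₀ (norm_nonneg y) hy
    _ = walkCount S i j n * ‖z‖ ^ n := by ring

theorem hasSum_genF {x y z : ℂ} (hx : ‖x‖ ≤ 1) (hy : ‖y‖ ≤ 1) (hz : S.card * ‖z‖ < 1) :
    HasSum (fun n => z ^ n * walkPoly S n x y) (genF S x y z) := by
  let e : ℕ × ℕ × ℕ ≃ ℕ × (ℕ × ℕ) := (Equiv.prodAssoc ℕ ℕ ℕ).symm.trans (Equiv.prodComm _ _)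
  set f : ℕ × ℕ × ℕ → ℂ := fun p =>
    (walkCount S p.1 p.2.1 p.2.2 : ℂ) * x ^ p.1 * y ^ p.2.1 * z ^ p.2.2
  have hrow : ∀ n, HasSum (fun ij => f (e.symm (n, ij))) (z ^ n * walkPoly S n x y) := by
    intro n
    rw [walkPoly, mul_sum]
    refine (hasSum_walkCount_mul n fun p => z ^ n * (x ^ p.1 * y ^ p.2)).congr_fun fun ij => ?_
    show (walkCount S ij.1 ij.2 n : ℂ) * x ^ ij.1 * y ^ ij.2 * z ^ n = _
    simp only [zpow_natCast]
    ring
  have hbound : Summable fun q : ℕ × ℕ × ℕ => (walkCount S q.2.1 q.2.2 q.1 : ℝ) * ‖z‖ ^ q.1 := by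
    refine (summable_prod_of_nonneg fun _ => by positivity).mpr
      ⟨fun n => (hasSum_walkCount_mul n fun _ => ‖z‖ ^ n).summable, ?_⟩
    refine (summable_geometric_of_lt_one (by positivity) hz).of_nonneg_of_le
      (fun _ => tsum_nonneg fun _ => by positivity) fun n => ?_
    rw [(hasSum_walkCount_mul n fun _ => ‖z‖ ^ n).tsum_eq, sum_const, nsmul_eq_mul, mul_pow]
    gcongr
    exact_mod_cast card_quarterWalks_le n
  have hsum : HasSum (f ∘ e.symm) (genF S x y z) := by
    rw [genF, ← e.symm.tsum_eq]
    exact (hbound.of_norm_bounded fun q => norm_genF_term_le hx hy _ _ _).hasSum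
  exact hsum.prod_fiberwise hrow

theorem genF_functional_equation (hS : ∀ s ∈ S, -1 ≤ s.1 ∧ -1 ≤ s.2) {x y z : ℂ}
    (hx : ‖x‖ ≤ 1) (hy : ‖y‖ ≤ 1) (hz : S.card * ‖z‖ < 1) :
    x * y * (genF S x y z - 1) =
      z * (stepPoly S x y * genF S x y z - stepPoly S 0 y * genF S 0 y z
        - stepPoly S x 0 * genF S x 0 z + stepPoly S 0 0 * genF S 0 0 z) := by
  have h0 : ‖(0 : ℂ)‖ ≤ 1 := by simp
  have hxy := hasSum_genF hx hy hz
  have hrhs := ((((hxy.mul_left (stepPoly S x y)).sub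
    ((hasSum_genF h0 hy hz).mul_left (stepPoly S 0 y))).sub
    ((hasSum_genF hx h0 hz).mul_left (stepPoly S x 0))).add
    ((hasSum_genF h0 h0 hz).mul_left (stepPoly S 0 0))).mul_left z
  have hlhs := (hasSum_nat_add_iff' 1).mpr (hxy.mul_left (x * y))
  rw [sum_range_one, pow_zero, walkPoly_zero, mul_one, ← mul_sub] at hlhs
  refine hlhs.unique (hrhs.congr_fun fun n => ?_)
  linear_combination z ^ (n + 1) * walkPoly_succ hS n x y

lemma kernel_eq_stepPoly (x y z : ℂ) : kernel S x y z = z * stepPoly S x y - x * y := rfl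

lemma cpoly_eq_stepPoly (x z : ℂ) : cpoly S x z = z * stepPoly S x 0 := by
  rw [cpoly, stepPoly, sum_filter]
  congr 1
  refine sum_congr rfl fun s _ => ?_
  rw [zero_zpow_eq, mul_ite, mul_one, mul_zero]
  exact if_congr (by omega) rfl rfl

end QuarterWalk

theorem difference_on_kernel_zeros_general (S : Finset (ℤ × ℤ))
    (hS : S ⊆ ({-1, 0, 1} ×ˢ {-1, 0, 1} : Finset (ℤ × ℤ)) \ {((0 : ℤ), (0 : ℤ))})
    (x x' y z : ℂ) (hx : ‖x‖ ≤ 1) (hx' : ‖x'‖ ≤ 1)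
    (hy : ‖y‖ ≤ 1) (hz : ‖z‖ < 1 / (S.card : ℝ))
    (hker : kernel S x y z = 0) (hker' : kernel S x' y z = 0) :
    cpoly S x' z * genF S x' 0 z - cpoly S x z * genF S x 0 z = (x' - x) * y := by
  have hsteps : ∀ s ∈ S, -1 ≤ s.1 ∧ -1 ≤ s.2 := fun s hs => by
    have := hS hs
    simp only [Finset.mem_sdiff, Finset.mem_product, Finset.mem_insert, Finset.mem_singleton]
      at this
    omega
  have hz' : S.card * ‖z‖ < 1 := by
    rcases (Nat.cast_nonneg (α := ℝ) S.card).eq_or_lt with hk | hk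
    · simp [← hk]
    · rwa [lt_div_iff₀' hk] at hz
  rw [QuarterWalk.kernel_eq_stepPoly] at hker hker'
  rw [QuarterWalk.cpoly_eq_stepPoly, QuarterWalk.cpoly_eq_stepPoly]
  linear_combination QuarterWalk.genF_functional_equation hsteps hx' hy hz'
    - QuarterWalk.genF_functional_equation hsteps hx hy hz'
    + genF S x' y z * hker' - genF S x y z * hker

/-- If `(x,y)` and `(x',y)` are two zeros of the kernel in the closed unit bidisc, then
`c(x';z)Q(x',0;z) − c(x;z)Q(x,0;z) = (x' − x)·y`. -/
theorem difference_on_kernel_zeros (S : Finset (ℤ × ℤ))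
    (hS : S ⊆ ({-1, 0, 1} ×ˢ {-1, 0, 1} : Finset (ℤ × ℤ)) \ {((0 : ℤ), (0 : ℤ))})
    (hk : 1 ≤ S.card)
    (x x' y z : ℂ) (hx : ‖x‖ ≤ 1) (hx' : ‖x'‖ ≤ 1)
    (hy : ‖y‖ ≤ 1) (hz : ‖z‖ < 1 / (S.card : ℝ))
    (hker : kernel S x y z = 0) (hker' : kernel S x' y z = 0) :
    cpoly S x' z * genF S x' 0 z - cpoly S x z * genF S x 0 z = (x' - x) * y :=
  difference_on_kernel_zeros_general S hS x x' y z hx hx' hy hz hker hker'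
end

section
/- If the step set S is singular, then for every integer n ≥ 1 there is no walk of length n in the quarter plane with steps in S starting and ending at the origin: q(0,0;n) = 0 for all n ≥ 1. -/
namespace IsSingular

variable {S : Finset (ℤ × ℤ)} {p : ℤ × ℤ}

lemma fst_add_snd_nonneg (hS : IsSingular S) (hp : p ∈ S) : 0 ≤ p.1 + p.2 := by
  rcases hS.2.2 p hp with rfl | rfl | rfl | rfl | rfl <;> norm_num

lemma eq_of_fst_add_snd_eq_zero (hS : IsSingular S) (hp : p ∈ S) (h : p.1 + p.2 = 0) :
    p = (-1, 1) ∨ p = (1, -1) := by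
  rcases hS.2.2 p hp with rfl | rfl | rfl | rfl | rfl <;> simp_all

end IsSingular

lemma fst_add_snd_eq_zero_of_sum_eq_zero {ι : Type*} [Fintype ι] {s : ι → ℤ × ℤ}
    (hs : ∀ m, 0 ≤ (s m).1 + (s m).2) (hsum : ∑ m, s m = 0) (m : ι) :
    (s m).1 + (s m).2 = 0 := by
  have htot : ∑ m, ((s m).1 + (s m).2) = 0 := by
    rw [Finset.sum_add_distrib, ← Prod.fst_sum, ← Prod.snd_sum, hsum]
    rfl
  exact (Finset.sum_eq_zero_iff_of_nonneg fun m _ => hs m).mp htot m (Finset.mem_univ m)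

lemma filter_le_zero_eq_singleton (k : ℕ) :
    Finset.univ.filter (fun m : Fin (k + 1) => m ≤ 0) = {0} := by
  ext m
  simp

theorem no_excursion_of_singular_general (S : Finset (ℤ × ℤ))
    (hsing : IsSingular S) :
    ∀ n : ℕ, 1 ≤ n → walkCount S 0 0 n = 0 := by
  intro n hn
  obtain ⟨k, rfl⟩ := Nat.exists_eq_add_of_le' hn
  rw [walkCount, Finset.card_eq_zero, Finset.eq_empty_iff_forall_notMem]
  rintro s hs
  obtain ⟨hquadrant, hsum⟩ := (Finset.mem_filter.mp hs).2
  have hfirst : (s 0 : ℤ × ℤ) = (-1, 1) ∨ (s 0 : ℤ × ℤ) = (1, -1) :=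
    hsing.eq_of_fst_add_snd_eq_zero (s 0).2 <|
      fst_add_snd_eq_zero_of_sum_eq_zero (fun m => hsing.fst_add_snd_nonneg (s m).2) hsum 0
  have hstart := hquadrant 0
  rw [filter_le_zero_eq_singleton, Finset.sum_singleton, Finset.sum_singleton] at hstart
  rcases hfirst with h | h <;> rw [h] at hstart <;> norm_num at hstart

/-- For a singular walk, there is no nontrivial excursion from the origin back
to the origin: `q(0,0;n) = 0` for all `n ≥ 1`. -/
theorem no_excursion_of_singular (S : Finset (ℤ × ℤ))
    (hS : S ⊆ ({-1, 0, 1} ×ˢ {-1, 0, 1} : Finset (ℤ × ℤ)) \ {((0 : ℤ), (0 : ℤ))})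
    (hsing : IsSingular S) :
    ∀ n : ℕ, 1 ≤ n → walkCount S 0 0 n = 0 :=
  no_excursion_of_singular_general S hsing
end

section
/- Let ω₁ be a nonzero purely imaginary complex number and let ω₂, ω₃ be positive real numbers such that ω₃/ω₂ is irrational. Then there is no nonzero polynomial P ∈ ℂ[X,Y] such that P(℘(ω; ω₁,ω₂), ℘(ω; ω₁,ω₃)) = 0 for all ω ∈ ℂ ∖ (Λ(ω₁,ω₂) ∪ Λ(ω₁,ω₃)); that is, the two Weierstrass functions ℘(·; ω₁,ω₂) and ℘(·; ω₁,ω₃) are algebraically independent over ℂ. -/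
/-- The Weierstrass elliptic function with periods `ω₁, ω₂`, defined by its
classical series (junk values on the lattice). -/
noncomputable def wp (ω₁ ω₂ : ℂ) (z : ℂ) : ℂ :=
  1 / z ^ 2 +
    ∑' p : {p : ℤ × ℤ // p ≠ 0},
      (1 / (z - ((p.val.1 : ℂ) * ω₁ + (p.val.2 : ℂ) * ω₂)) ^ 2 -
        1 / ((p.val.1 : ℂ) * ω₁ + (p.val.2 : ℂ) * ω₂) ^ 2)

/-- Derivative of the Weierstrass elliptic function. -/
noncomputable def wpDeriv (ω₁ ω₂ : ℂ) (z : ℂ) : ℂ :=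
  deriv (wp ω₁ ω₂) z

/-- Membership in the lattice `ℤω₁ + ℤω₂`. -/
def inLattice (ω₁ ω₂ : ℂ) (z : ℂ) : Prop :=
  ∃ m n : ℤ, z = (m : ℂ) * ω₁ + (n : ℂ) * ω₂

/-- The invariant `g₂` of the lattice `ℤω₁ + ℤω₂`. -/
noncomputable def g2 (ω₁ ω₂ : ℂ) : ℂ :=
  60 * ∑' p : {p : ℤ × ℤ // p ≠ 0}, 1 / ((p.val.1 : ℂ) * ω₁ + (p.val.2 : ℂ) * ω₂) ^ 4

/-- The invariant `g₃` of the lattice `ℤω₁ + ℤω₂`. -/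
noncomputable def g3 (ω₁ ω₂ : ℂ) : ℂ :=
  140 * ∑' p : {p : ℤ × ℤ // p ≠ 0}, 1 / ((p.val.1 : ℂ) * ω₁ + (p.val.2 : ℂ) * ω₂) ^ 6

/-!
Both functions have a double pole at `0`. Since `ω₃/ω₂` is irrational, `ℤω₂ + ℤω₃` is dense in
`ℝ`, so every real `t ∈ (0, ω₂)` is congruent, modulo `ℤω₂ + ℤω₃`, to arbitrarily small positive
reals `w`. At a common translate `ζ = t - aω₂ = w + bω₃` the assumed relation gives
`P(℘₂(t), ℘₃(w)) = 0`, and `℘₃(w)` is unbounded as `w → 0⁺`: for each of the infinitely many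
values `x = ℘₂(t)` the polynomial `P(x, ·)` has infinitely many roots, which forces `P = 0`.
-/

open Filter Topology Bornology Polynomial Polynomial.Bivariate
open scoped PeriodPair

theorem MvPolynomial.eval_equivMvPolynomial {R : Type*} [CommRing R] (p : R[X][Y]) (x y : R) :
    MvPolynomial.eval ![x, y] (equivMvPolynomial R p) = p.evalEval x y := by
  have : (MvPolynomial.eval ![x, y]).comp (equivMvPolynomial R : R[X][Y] →+* _) =
      evalEvalRingHom x y := by
    ext <;> simp
  exact RingHom.congr_fun this p

theorem Polynomial.eq_zero_of_infinite_fibers {R : Type*} [CommRing R] [IsDomain R]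
    {p : R[X][Y]} {S : Set R} (hS : S.Infinite)
    (h : ∀ x ∈ S, {y | p.evalEval x y = 0}.Infinite) : p = 0 := by
  ext n : 1
  rw [coeff_zero]
  refine eq_zero_of_infinite_isRoot _ (hS.mono fun x hx => ?_)
  have hx : p.map (evalRingHom x) = 0 :=
    eq_zero_of_infinite_isRoot _ (by simpa [IsRoot, map_evalRingHom_eval] using h x hx)
  simpa using congr_arg (coeff · n) hx

theorem MvPolynomial.eq_zero_of_infinite_fibers {R : Type*} [CommRing R] [IsDomain R]
    {P : MvPolynomial (Fin 2) R} {S : Set R} (hS : S.Infinite)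
    (h : ∀ x ∈ S, {y | eval ![x, y] P = 0}.Infinite) : P = 0 := by
  obtain ⟨p, rfl⟩ := (equivMvPolynomial R).surjective P
  simp only [eval_equivMvPolynomial] at h
  rw [Polynomial.eq_zero_of_infinite_fibers hS h, map_zero]

theorem Set.infinite_image_of_tendsto_cobounded {α E : Type*} [PseudoMetricSpace E]
    {f : α → E} {l : Filter α} {s : Set α} (hf : Tendsto f l (cobounded E))
    (hs : ∃ᶠ x in l, x ∈ s) : (f '' s).Infinite := fun hfin => by
  have hout : ∀ᶠ x in l, f x ∉ f '' s := hf hfin.isBounded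
  obtain ⟨x, hx, hxs⟩ := (hout.and_frequently hs).exists
  exact hx (mem_image_of_mem f hxs)

theorem Dense.frequently_nhdsGT_sub_mem {G : AddSubgroup ℝ} (hG : Dense (G : Set ℝ)) (t c : ℝ) :
    ∃ᶠ w in 𝓝[>] c, t - w ∈ G := by
  refine (nhdsGT_basis c).frequently_iff.mpr fun ε hε => ?_
  obtain ⟨g, hg, hgt⟩ := hG.exists_between (sub_lt_sub_left hε t)
  exact ⟨t - g, ⟨by linarith [hgt.2], by linarith [hgt.1]⟩, by simpa using hg⟩

namespace PeriodPair

variable (L : PeriodPair)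

theorem inLattice_iff {z : ℂ} : inLattice L.ω₁ L.ω₂ z ↔ z ∈ L.lattice := by
  simp only [inLattice, mem_lattice, eq_comm]

theorem wp_eq_weierstrassP : wp L.ω₁ L.ω₂ = ℘[L] := by
  ext z
  have hsum := L.latticeEquivProd.symm.toEquiv.hasSum_iff.mpr (L.hasSum_weierstrassP z)
  rw [← hsum.tsum_eq, ← hsum.summable.tsum_subtype_add_tsum_subtype_compl {0}, tsum_singleton, wp]
  congr 1
  · simp
  · exact tsum_congr fun p => by
      rw [Function.comp_apply, LinearEquiv.coe_toEquiv, latticeEquiv_symm_apply]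

theorem tendsto_weierstrassP_nhdsNE_zero : Tendsto ℘[L] (𝓝[≠] 0) (cobounded ℂ) :=
  tendsto_cobounded_of_meromorphicOrderAt_neg <| by
    rw [L.order_weierstrassP 0 (zero_mem _)]
    decide

theorem tendsto_weierstrassP_ofReal_nhdsGT_zero :
    Tendsto (fun t : ℝ => ℘[L] t) (𝓝[>] 0) (cobounded ℂ) := by
  have hofReal := Complex.continuous_ofReal.continuousWithinAt.tendsto_nhdsWithin
    (x := 0) (s := Set.Ioi 0) (t := {0}ᶜ) fun t (ht : 0 < t) => by simpa using ht.ne'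
  rw [Complex.ofReal_zero] at hofReal
  exact L.tendsto_weierstrassP_nhdsNE_zero.comp hofReal

theorem eval_weierstrassP_eq_zero_of_sub_mem {L' : PeriodPair} {P : MvPolynomial (Fin 2) ℂ}
    (hP : ∀ z, z ∉ L.lattice → z ∉ L'.lattice → MvPolynomial.eval ![℘[L] z, ℘[L'] z] P = 0)
    {t w : ℂ} (ht : t ∉ L.lattice) (hw : w ∉ L'.lattice) (htw : t - w ∈ L.lattice ⊔ L'.lattice) :
    MvPolynomial.eval ![℘[L] t, ℘[L'] w] P = 0 := by
  obtain ⟨l, hl, l', hl', hsum⟩ := Submodule.mem_sup.mp htw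
  have hζ : t - l = w + l' := by linear_combination -hsum
  have := hP (t - l) (by rwa [Submodule.sub_mem_iff_left _ hl])
    (by rwa [hζ, Submodule.add_mem_iff_left _ hl'])
  rwa [L.weierstrassP_sub_coe t ⟨l, hl⟩, hζ, L'.weierstrassP_add_coe w ⟨l', hl'⟩] at this

def ofReal (ω₁ : ℂ) (hω₁ : ω₁.im ≠ 0) (ω : ℝ) (hω : ω ≠ 0) : PeriodPair where
  ω₁ := ω₁
  ω₂ := ω
  indep := by
    refine LinearIndependent.pair_iff.mpr fun s t hst => ?_
    have him := congr_arg Complex.im hst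
    have hre := congr_arg Complex.re hst
    simp only [Complex.real_smul, Complex.add_im, Complex.add_re, Complex.mul_im,
      Complex.mul_re, Complex.ofReal_re, Complex.ofReal_im] at him hre
    have hs : s = 0 := by simpa [hω₁] using him
    subst hs
    simpa [hω] using hre

theorem ofReal_notMem_lattice {ω₁ : ℂ} (hω₁ : ω₁.im ≠ 0) {ω : ℝ} (hω : ω ≠ 0) {t : ℝ}
    (ht : 0 < t) (htω : t < ω) : (t : ℂ) ∉ (ofReal ω₁ hω₁ ω hω).lattice := by
  rintro hmem
  obtain ⟨m, n, hmn⟩ := mem_lattice.mp hmem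
  have hm : (m : ℝ) = 0 := by simpa [ofReal, hω₁] using congr_arg Complex.im hmn
  have hn : (n : ℝ) * ω = t := by simpa [ofReal, hm] using congr_arg Complex.re hmn
  have h0 : (0 : ℝ) < n := pos_of_mul_pos_left (hn ▸ ht) (ht.trans htω).le
  have h1 : (n : ℝ) < 1 := by nlinarith
  have : 0 < n := by exact_mod_cast h0
  have : n < 1 := by exact_mod_cast h1
  omega

end PeriodPair

/-- If `ω₃/ω₂` is irrational, the Weierstrass functions `℘(·; ω₁,ω₂)` and `℘(·; ω₁,ω₃)`
are algebraically independent over `ℂ`. -/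
theorem wp_algebraically_independent (ω₁ : ℂ) (h₁ : ω₁ ≠ 0) (hre : ω₁.re = 0)
    (ω₂ ω₃ : ℝ) (h₂ : 0 < ω₂) (h₃ : 0 < ω₃) (hirr : Irrational (ω₃ / ω₂)) :
    ¬ ∃ P : MvPolynomial (Fin 2) ℂ, P ≠ 0 ∧
      ∀ ω : ℂ, ¬ inLattice ω₁ (ω₂ : ℂ) ω → ¬ inLattice ω₁ (ω₃ : ℂ) ω →
        MvPolynomial.eval ![wp ω₁ (ω₂ : ℂ) ω, wp ω₁ (ω₃ : ℂ) ω] P = 0 := by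
  rintro ⟨P, hP, hvan⟩
  have him : ω₁.im ≠ 0 := fun h => h₁ (Complex.ext hre h)
  set L₂ := PeriodPair.ofReal ω₁ him ω₂ h₂.ne'
  set L₃ := PeriodPair.ofReal ω₁ him ω₃ h₃.ne'
  have hvan' : ∀ z, z ∉ L₂.lattice → z ∉ L₃.lattice →
      MvPolynomial.eval ![℘[L₂] z, ℘[L₃] z] P = 0 := fun z hz₂ hz₃ =>
    L₂.wp_eq_weierstrassP ▸ L₃.wp_eq_weierstrassP ▸
      hvan z (mt L₂.inLattice_iff.mp hz₂) (mt L₃.inLattice_iff.mp hz₃)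
  set G : AddSubgroup ℝ :=
    (L₂.lattice ⊔ L₃.lattice).toAddSubgroup.comap Complex.ofRealHom.toAddMonoidHom
  have hG : Dense (G : Set ℝ) :=
    (dense_addSubgroupClosure_pair_iff.mpr hirr).mono fun x hx =>
      (AddSubgroup.closure_le G).mpr (Set.pair_subset_iff.mpr
        ⟨Submodule.mem_sup_right L₃.ω₂_mem_lattice, Submodule.mem_sup_left L₂.ω₂_mem_lattice⟩) hx
  apply hP
  refine MvPolynomial.eq_zero_of_infinite_fibers
    (Set.infinite_image_of_tendsto_cobounded L₂.tendsto_weierstrassP_ofReal_nhdsGT_zero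
      (Eventually.frequently (Ioo_mem_nhdsGT h₂))) ?_
  rintro _ ⟨t, ht, rfl⟩
  refine (Set.infinite_image_of_tendsto_cobounded L₃.tendsto_weierstrassP_ofReal_nhdsGT_zero
    ((hG.frequently_nhdsGT_sub_mem t 0).and_eventually (Ioo_mem_nhdsGT h₃))).mono ?_
  rintro _ ⟨w, ⟨htw, hw⟩, rfl⟩
  exact L₂.eval_weierstrassP_eq_zero_of_sub_mem hvan'
    (PeriodPair.ofReal_notMem_lattice him h₂.ne' ht.1 ht.2)
    (PeriodPair.ofReal_notMem_lattice him h₃.ne' hw.1 hw.2)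
    (by rw [← Complex.ofReal_sub]; exact htw)
end

section
/- Let U ⊆ ℂ be a nonempty open connected set, g₂, g₃ ∈ ℂ, and let f : U → ℂ be a nonconstant holomorphic function satisfying f′(t)² = 4·f(t)³ − g₂·f(t) − g₃ for all t ∈ U. Then for every integer r ≥ 0 there exists a polynomial p_r ∈ ℂ[X] of degree r+1 with leading coefficient (2r+1)! such that the (2r)-th derivative of f satisfies f^{(2r)}(t) = p_r(f(t)) for all t ∈ U. -/
/-!
Differentiating `f′² = W(f)`, with `W = 4X³ - g₂X - g₃`, gives `2 f′ f″ = W′(f) f′`. As `f` is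
nonconstant on the connected set `U`, `f′` is nonzero near some point, so the identity theorem
yields `f″ = ½ W′(f)` on all of `U`. Consequently `(p ∘ f)″ = p″(f) W(f) + ½ p′(f) W′(f)` for
every polynomial `p`, and starting from `f = X ∘ f` the `(2r)`-th derivative is `p_r ∘ f` with
`p_{r+1} = p_r″ W + ½ p_r′ W′`. If `deg p_r = n`, the top coefficient of `p_{r+1}` is
`(4n(n-1) + 6n) = 2n(2n+1)` times that of `p_r`, which produces `(2r+1)!`.
-/

open Polynomial Nat Topology

namespace Polynomial

variable {K : Type*} [Field K]

/-- If `f′² = W ∘ f` and `f″ = ½ W′ ∘ f`, then `(p ∘ f)″ = (secondDerivPoly W p) ∘ f`. -/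
noncomputable def secondDerivPoly (W p : K[X]) : K[X] :=
  derivative (derivative p) * W + C 2⁻¹ * derivative p * derivative W

section

variable [NeZero (2 : K)] {W p : K[X]} {m : ℕ}

theorem secondDerivPoly_eq_derivative_sub (W p : K[X]) :
    secondDerivPoly W p =
      derivative (derivative p * W) - C 2⁻¹ * derivative p * derivative W := by
  have half_add_half : (C 2⁻¹ : K[X]) + C 2⁻¹ = 1 := by
    rw [← C_add, ← one_div, add_halves, C_1]
  rw [secondDerivPoly, derivative_mul]
  linear_combination (derivative p * derivative W) * half_add_half

theorem natDegree_secondDerivPoly_le (hW : W.natDegree ≤ 3) (hp : p.natDegree ≤ m + 1) :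
    (secondDerivPoly W p).natDegree ≤ m + 2 := by
  have hp' : (derivative p).natDegree ≤ m := (natDegree_derivative_le p).trans (by omega)
  have hW' : (derivative W).natDegree ≤ 2 := (natDegree_derivative_le W).trans (by omega)
  have hpW : (derivative p * W).natDegree ≤ m + 3 := natDegree_mul_le_of_le hp' hW
  rw [secondDerivPoly_eq_derivative_sub, mul_assoc, ← max_self (m + 2)]
  exact natDegree_sub_le_of_le
    ((natDegree_derivative_le _).trans (Nat.sub_le_of_le_add hpW))
    ((natDegree_C_mul_le _ _).trans (natDegree_mul_le_of_le hp' hW'))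

theorem coeff_secondDerivPoly (hW : W.natDegree ≤ 3) (hp : p.natDegree ≤ m + 1) :
    (secondDerivPoly W p).coeff (m + 2) =
      (m + 1) * (2 * m + 3) / 2 * W.coeff 3 * p.coeff (m + 1) := by
  have hp' : (derivative p).natDegree ≤ m := (natDegree_derivative_le p).trans (by omega)
  have hW' : (derivative W).natDegree ≤ 2 := (natDegree_derivative_le W).trans (by omega)
  have top_mul : (derivative p * W).coeff (m + 2 + 1) = (derivative p).coeff m * W.coeff 3 :=
    coeff_mul_add_eq_of_natDegree_le hp' hW
  rw [secondDerivPoly_eq_derivative_sub, coeff_sub, coeff_derivative, top_mul, mul_assoc (C _),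
    coeff_C_mul, coeff_mul_add_eq_of_natDegree_le hp' hW', coeff_derivative, coeff_derivative]
  field_simp
  push_cast
  ring

end

variable [CharZero K] {W p : K[X]} {m : ℕ}

theorem natDegree_leadingCoeff_secondDerivPoly (hW : W.natDegree ≤ 3) (hW3 : W.coeff 3 ≠ 0)
    (hp : p.natDegree = m + 1) :
    (secondDerivPoly W p).natDegree = m + 2 ∧
      (secondDerivPoly W p).leadingCoeff =
        (m + 1) * (2 * m + 3) / 2 * W.coeff 3 * p.leadingCoeff := by
  have hcoeff := coeff_secondDerivPoly hW hp.le
  rw [← hp, coeff_natDegree] at hcoeff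
  have hp0 : p.leadingCoeff ≠ 0 := leadingCoeff_ne_zero.mpr (by rintro rfl; simp at hp)
  have hfactor : ((m : K) + 1) * (2 * m + 3) / 2 ≠ 0 := div_ne_zero (by norm_cast) two_ne_zero
  have hdeg : (secondDerivPoly W p).natDegree = m + 2 :=
    natDegree_eq_of_le_of_coeff_ne_zero (natDegree_secondDerivPoly_le hW hp.le)
      (by rw [hcoeff]; exact mul_ne_zero (mul_ne_zero hfactor hW3) hp0)
  exact ⟨hdeg, by rw [leadingCoeff, hdeg, hcoeff]⟩

theorem natDegree_leadingCoeff_iterate_secondDerivPoly (hW : W.natDegree ≤ 3)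
    (hW3 : W.coeff 3 = 4) (r : ℕ) :
    ((secondDerivPoly W)^[r] X).natDegree = r + 1 ∧
      ((secondDerivPoly W)^[r] X).leadingCoeff = (2 * r + 1)! := by
  induction r with
  | zero => simp
  | succ r ih =>
    obtain ⟨hdeg, hlead⟩ := ih
    rw [Function.iterate_succ_apply']
    obtain ⟨hdeg', hlead'⟩ :=
      natDegree_leadingCoeff_secondDerivPoly hW (by rw [hW3]; norm_num) hdeg
    refine ⟨hdeg', ?_⟩
    have hfact : (2 * (r + 1) + 1)! = (2 * r + 3) * ((2 * r + 2) * (2 * r + 1)!) := by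
      rw [← factorial_succ (2 * r + 1), ← factorial_succ (2 * r + 2)]
      rfl
    rw [hlead', hlead, hW3, hfact]
    push_cast
    ring

end Polynomial

section Holomorphic

variable {U : Set ℂ} {f : ℂ → ℂ} {W : ℂ[X]}

theorem two_mul_deriv_mul_deriv_deriv_eq (hU : IsOpen U) (hf : DifferentiableOn ℂ f U)
    (hode : ∀ t ∈ U, deriv f t ^ 2 = W.eval (f t)) {t : ℂ} (ht : t ∈ U) :
    2 * deriv f t * deriv (deriv f) t = (derivative W).eval (f t) * deriv f t := by
  have hft : HasDerivAt f (deriv f t) t := (hf.differentiableAt (hU.mem_nhds ht)).hasDerivAt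
  have hf't : HasDerivAt (deriv f) (deriv (deriv f) t) t :=
    ((hf.analyticOnNhd hU).deriv_of_isOpen hU t ht).differentiableAt.hasDerivAt
  have hsq : HasDerivAt (fun s => deriv f s ^ 2) (2 * deriv f t * deriv (deriv f) t) t := by
    simpa using hf't.fun_pow 2
  have hW : HasDerivAt (fun s => W.eval (f s)) ((derivative W).eval (f t) * deriv f t) t :=
    (W.hasDerivAt (f t)).comp t hft
  exact hsq.unique (hW.congr_of_eventuallyEq
    (Filter.eventuallyEq_of_mem (hU.mem_nhds ht) hode))

theorem deriv_deriv_eq_of_deriv_sq_eq (hU : IsOpen U) (hUc : IsPreconnected U)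
    (hf : DifferentiableOn ℂ f U) (hnc : ∃ a ∈ U, ∃ b ∈ U, f a ≠ f b)
    (hode : ∀ t ∈ U, deriv f t ^ 2 = W.eval (f t)) :
    ∀ t ∈ U, deriv (deriv f) t = 2⁻¹ * (derivative W).eval (f t) := by
  have hfa : AnalyticOnNhd ℂ f U := hf.analyticOnNhd hU
  have hf'a : AnalyticOnNhd ℂ (deriv f) U := hfa.deriv_of_isOpen hU
  obtain ⟨z₀, hz₀, hf'z₀⟩ : ∃ z₀ ∈ U, deriv f z₀ ≠ 0 := by
    obtain ⟨a, ha, b, hb, hab⟩ := hnc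
    by_contra! hconst
    exact hab (hU.is_const_of_deriv_eq_zero hUc hf hconst ha hb)
  set g : ℂ → ℂ := fun z => deriv (deriv f) z - 2⁻¹ * (derivative W).eval (f z) with hg_def
  have hg : AnalyticOnNhd ℂ g U :=
    (hf'a.deriv_of_isOpen hU).sub
      ((((derivative W).differentiable.comp_differentiableOn hf).const_mul 2⁻¹).analyticOnNhd hU)
  have hg_near : g =ᶠ[𝓝 z₀] 0 := by
    filter_upwards [(hf'a z₀ hz₀).continuousAt.eventually_ne hf'z₀, hU.mem_nhds hz₀]
      with z hf'z hz
    rw [hg_def, Pi.zero_apply, sub_eq_zero]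
    apply mul_left_cancel₀ (mul_ne_zero two_ne_zero hf'z)
    linear_combination two_mul_deriv_mul_deriv_deriv_eq hU hf hode hz
  intro t ht
  exact sub_eq_zero.mp (hg.eqOn_zero_of_preconnected_of_eventuallyEq_zero hUc hz₀ hg_near ht)

theorem deriv_deriv_eval_comp (hU : IsOpen U) (hf : DifferentiableOn ℂ f U)
    (hode : ∀ t ∈ U, deriv f t ^ 2 = W.eval (f t))
    (hf'' : ∀ t ∈ U, deriv (deriv f) t = 2⁻¹ * (derivative W).eval (f t))
    (p : ℂ[X]) {t : ℂ} (ht : t ∈ U) :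
    deriv (deriv fun s => p.eval (f s)) t = (secondDerivPoly W p).eval (f t) := by
  have hdf : ∀ z ∈ U, HasDerivAt f (deriv f z) z :=
    fun z hz => (hf.differentiableAt (hU.mem_nhds hz)).hasDerivAt
  have hfirst : deriv (fun s => p.eval (f s)) =ᶠ[𝓝 t]
      fun s => (derivative p).eval (f s) * deriv f s :=
    Filter.eventually_of_mem (hU.mem_nhds ht) fun z hz =>
      ((p.hasDerivAt (f z)).comp z (hdf z hz)).deriv
  have hf't : HasDerivAt (deriv f) (deriv (deriv f) t) t :=
    ((hf.analyticOnNhd hU).deriv_of_isOpen hU t ht).differentiableAt.hasDerivAt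
  have hp't : HasDerivAt (fun s => (derivative p).eval (f s))
      ((derivative (derivative p)).eval (f t) * deriv f t) t :=
    ((derivative p).hasDerivAt (f t)).comp t (hdf t ht)
  rw [hfirst.deriv_eq, (hp't.fun_mul hf't).deriv, hf'' t ht, secondDerivPoly]
  simp only [eval_add, eval_mul, eval_C]
  linear_combination (derivative (derivative p)).eval (f t) * hode t ht

theorem iteratedDeriv_two_mul_eq_eval_iterate (hU : IsOpen U) (hf : DifferentiableOn ℂ f U)
    (hode : ∀ t ∈ U, deriv f t ^ 2 = W.eval (f t))
    (hf'' : ∀ t ∈ U, deriv (deriv f) t = 2⁻¹ * (derivative W).eval (f t)) (r : ℕ) :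
    ∀ t ∈ U, iteratedDeriv (2 * r) f t = ((secondDerivPoly W)^[r] X).eval (f t) := by
  induction r with
  | zero => simp
  | succ r ih =>
    intro t ht
    have hnear : iteratedDeriv (2 * r) f =ᶠ[𝓝 t]
        fun s => ((secondDerivPoly W)^[r] X).eval (f s) :=
      Filter.eventually_of_mem (hU.mem_nhds ht) ih
    rw [show 2 * (r + 1) = 2 * r + 1 + 1 by ring, iteratedDeriv_succ, iteratedDeriv_succ,
      hnear.deriv.deriv_eq, Function.iterate_succ_apply']
    exact deriv_deriv_eval_comp hU hf hode hf'' _ ht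

end Holomorphic

/-- Even-order derivatives of a solution of `f′² = 4f³ − g₂f − g₃` are polynomials
in `f`, with the `(2r)`-th derivative given by a polynomial of degree `r+1` and
leading coefficient `(2r+1)!`. -/
theorem even_iterated_deriv_poly (U : Set ℂ) (hUo : IsOpen U) (hUc : IsConnected U)
    (g₂ g₃ : ℂ) (f : ℂ → ℂ) (hf : DifferentiableOn ℂ f U)
    (hnc : ∃ a ∈ U, ∃ b ∈ U, f a ≠ f b)
    (hode : ∀ t ∈ U, deriv f t ^ 2 = 4 * f t ^ 3 - g₂ * f t - g₃) :
    ∀ r : ℕ, ∃ p : Polynomial ℂ,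
      p.natDegree = r + 1 ∧
      p.leadingCoeff = ((2 * r + 1).factorial : ℂ) ∧
      ∀ t ∈ U, iteratedDeriv (2 * r) f t = p.eval (f t) := by
  set W : ℂ[X] := 4 * X ^ 3 - C g₂ * X - C g₃
  have hW : W.natDegree ≤ 3 := by simp only [W]; compute_degree
  have hW3 : W.coeff 3 = 4 := by simp [W]
  have hodeW : ∀ t ∈ U, deriv f t ^ 2 = W.eval (f t) := by simpa [W] using hode
  have hf'' := deriv_deriv_eq_of_deriv_sq_eq hUo hUc.isPreconnected hf hnc hodeW
  intro r
  obtain ⟨hdeg, hlead⟩ := natDegree_leadingCoeff_iterate_secondDerivPoly hW hW3 r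
  exact ⟨_, hdeg, hlead, iteratedDeriv_two_mul_eq_eval_iterate hUo hf hodeW hf'' r⟩
end

section
/- Suppose (−1,−1) ∈ S, so that δ = 1 and c(0;z) = c̃(0;z) = z. Then for every complex x₀, y₀, z with |x₀| ≤ 1, |y₀| ≤ 1, 0 < |z| < 1/k and K(x₀,y₀;z) = 0, one has Q(0,0;z) = x₀y₀/z − (c(x₀;z)·Q(x₀,0;z) − z·Q(0,0;z))/z − (c̃(y₀;z)·Q(0,y₀;z) − z·Q(0,0;z))/z. -/
/-!
Write `Q(x,y;z) = ∑ₙ Aₙ(x,y) zⁿ`, where `Aₙ` is the generating polynomial of the walks of length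
`n` by endpoint. Splitting off the last step gives
`x y Aₙ₊₁ = T(x,y) Aₙ − c₀(x) Aₙ(x,0) − c̃₀(y) Aₙ(0,y) + δ Aₙ(0,0)` with
`T(x,y) = ∑_{s ∈ S} x^{s₁+1} y^{s₂+1}` and `c = z c₀`, `c̃ = z c̃₀`: the correction terms remove the
steps that would cross an axis, adding back the corner step `(−1,−1)` (inclusion–exclusion).
Multiplying by `zⁿ⁺¹` and summing gives the kernel equation
`K Q = c Q(x,0) + c̃ Q(0,y) − δ z Q(0,0) − x y`, and all series converge for `|x|, |y| ≤ 1`,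
`|z| < 1/|S|` because a walk of length `n` ends in `[0,n]²`. At a zero of the kernel with `δ = 1`
the kernel equation is the claimed formula.
-/

open Finset

theorem Fin.forall_sum_Iic_snoc_nonneg {M : Type*} [AddCommMonoid M] [LE M] {n : ℕ}
    (t : Fin n → M) (v : M) :
    (∀ l, 0 ≤ ∑ m ≤ l, (Fin.snoc t v : Fin (n + 1) → M) m) ↔
      (∀ l, 0 ≤ ∑ m ≤ l, t m) ∧ 0 ≤ ∑ m, t m + v := by
  have hlast : Iic (Fin.last n) = univ := Iic_top
  simp only [Fin.forall_fin_succ', Fin.sum_Iic_castSucc, Fin.snoc_castSucc, hlast,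
    Fin.sum_univ_castSucc, Fin.snoc_last]

section truncEval

variable {K : Type*} [Field K]

def truncEval (f : ℤ → K) (N : ℕ) (x : K) : K :=
  ∑ i ∈ range N, f i * x ^ i

theorem truncEval_congr {f g : ℤ → K} {N : ℕ} (h : ∀ i : ℕ, i < N → f i = g i) (x : K) :
    truncEval f N x = truncEval g N x :=
  sum_congr rfl fun i hi => by rw [h i (mem_range.mp hi)]

theorem truncEval_sum {ι : Type*} (s : Finset ι) (f : ι → ℤ → K) (N : ℕ) (x : K) :
    truncEval (fun m => ∑ p ∈ s, f p m) N x = ∑ p ∈ s, truncEval (f p) N x := by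
  simp only [truncEval, sum_mul]
  exact sum_comm

theorem truncEval_const_mul (c : K) (f : ℤ → K) (N : ℕ) (x : K) :
    truncEval (fun m => c * f m) N x = c * truncEval f N x := by
  simp only [truncEval, mul_sum, mul_assoc]

theorem truncEval_sub (f g : ℤ → K) (N : ℕ) (x : K) :
    truncEval (fun m => f m - g m) N x = truncEval f N x - truncEval g N x := by
  simp only [truncEval, sub_mul, sum_sub_distrib]

theorem truncEval_zero_right (f : ℤ → K) (N : ℕ) : truncEval f (N + 1) 0 = f 0 := by
  simp [truncEval, sum_range_succ']

theorem truncEval_eq_of_support_subset {f : ℤ → K} {N M : ℕ}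
    (hf : Function.support f ⊆ Set.Icc 0 N) (hM : N < M) (x : K) :
    truncEval f M x = truncEval f (N + 1) x := by
  refine (sum_subset (range_subset_range.mpr hM) fun i _ hi => ?_).symm
  have hfi : f i = 0 := Function.notMem_support.mp fun h => hi (mem_range.mpr (by
    have := (hf h).2
    omega))
  rw [hfi, zero_mul]

theorem mul_truncEval_comp_sub {f : ℤ → K} {N : ℕ} (hf : Function.support f ⊆ Set.Icc 0 N)
    {a : ℤ} (ha : a ∈ ({-1, 0, 1} : Finset ℤ)) (x : K) :
    x * truncEval (fun m => f (m - a)) (N + 2) x =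
      x ^ (a + 1) * truncEval f (N + 1) x - if a = -1 then f 0 else 0 := by
  have hneg : f (-1) = 0 := Function.notMem_support.mp fun h => by simpa using (hf h).1
  simp only [mem_insert, mem_singleton] at ha
  rcases ha with rfl | rfl | rfl
  · have hshift : x * truncEval (fun m => f (m - -1)) (N + 2) x = truncEval f (N + 3) x - f 0 := by
      rw [truncEval, truncEval, sum_range_succ' _ (N + 2), mul_sum]
      simp only [sub_neg_eq_add, Nat.cast_add, Nat.cast_one, Nat.cast_zero, pow_zero, mul_one,
        add_sub_cancel_right]
      exact sum_congr rfl fun i _ => by ring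
    rw [hshift, truncEval_eq_of_support_subset hf (by omega)]
    simp
  · simp only [sub_zero, zero_add, zpow_one, if_neg (by norm_num : (0 : ℤ) ≠ -1)]
    exact congrArg (x * ·) (truncEval_eq_of_support_subset hf (by omega) x)
  · rw [truncEval, truncEval, sum_range_succ', mul_sum, mul_add, mul_sum]
    simp only [Nat.cast_zero, zero_sub, hneg, zero_mul, mul_zero, add_zero, Nat.cast_add,
      Nat.cast_one, add_sub_cancel_right, if_neg (by norm_num : (1 : ℤ) ≠ -1), sub_zero,
      one_add_one_eq_two, zpow_two]
    exact sum_congr rfl fun i _ => by ring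

def truncEval₂ (F : ℤ → ℤ → K) (N : ℕ) (x y : K) : K :=
  truncEval (fun j => truncEval (fun i => F i j) N x) N y

theorem truncEval₂_zero_zero (F : ℤ → ℤ → K) (N : ℕ) : truncEval₂ F (N + 1) 0 0 = F 0 0 := by
  simp only [truncEval₂, truncEval_zero_right]

theorem mul_mul_truncEval₂_comp_sub {F : ℤ → ℤ → K} {N : ℕ}
    (hF : ∀ i j, F i j ≠ 0 → i ∈ Set.Icc 0 (N : ℤ) ∧ j ∈ Set.Icc 0 (N : ℤ)) {a b : ℤ}
    (ha : a ∈ ({-1, 0, 1} : Finset ℤ)) (hb : b ∈ ({-1, 0, 1} : Finset ℤ)) (x y : K) :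
    x * y * truncEval₂ (fun i j => F (i - a) (j - b)) (N + 2) x y =
      x ^ (a + 1) * y ^ (b + 1) * truncEval₂ F (N + 1) x y
        - (if b = -1 then x ^ (a + 1) * truncEval₂ F (N + 1) x 0 else 0)
        - (if a = -1 then y ^ (b + 1) * truncEval₂ F (N + 1) 0 y else 0)
        + if a = -1 ∧ b = -1 then F 0 0 else 0 := by
  have hrow : ∀ j, Function.support (fun i => F i j) ⊆ Set.Icc 0 N := fun j i hi => (hF i j hi).1
  set g : ℤ → K := fun j =>
    x ^ (a + 1) * truncEval (fun i => F i j) (N + 1) x - if a = -1 then F 0 j else 0 with hg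
  have hg_supp : Function.support g ⊆ Set.Icc 0 N := by
    refine Function.support_subset_iff'.mpr fun j hj => ?_
    have hcol : ∀ i, F i j = 0 := fun i => by_contra fun h => hj (hF i j h).2
    simp [hg, truncEval, hcol]
  have hinner : x * y * truncEval₂ (fun i j => F (i - a) (j - b)) (N + 2) x y =
      y * truncEval (fun j => g (j - b)) (N + 2) y := by
    rw [truncEval₂, mul_comm x y, mul_assoc, ← truncEval_const_mul]
    exact congrArg (y * ·) (truncEval_congr (fun j _ => mul_truncEval_comp_sub (hrow _) ha x) y)
  have hg_eval : truncEval g (N + 1) y =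
      x ^ (a + 1) * truncEval₂ F (N + 1) x y
        - if a = -1 then truncEval₂ F (N + 1) 0 y else 0 := by
    by_cases ha1 : a = -1 <;>
      simp [hg, ha1, truncEval₂, truncEval_sub, truncEval_const_mul, truncEval_zero_right]
  rw [hinner, mul_truncEval_comp_sub hg_supp hb y, hg_eval]
  simp only [hg, truncEval₂, truncEval_zero_right]
  by_cases ha1 : a = -1 <;> by_cases hb1 : b = -1 <;> simp [ha1, hb1] <;> ring

end truncEval

theorem forall_le_one_of_subset {S : Finset (ℤ × ℤ)}
    (hS : S ⊆ ({-1, 0, 1} ×ˢ {-1, 0, 1} : Finset (ℤ × ℤ))) : ∀ p ∈ S, p ≤ 1 := by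
  intro p hp
  obtain ⟨h1, h2⟩ := mem_product.mp (hS hp)
  simp only [mem_insert, mem_singleton] at h1 h2
  exact Prod.mk_le_mk.mpr ⟨by omega, by omega⟩

theorem walkCount_eq_card (S : Finset (ℤ × ℤ)) (i j : ℤ) (n : ℕ) :
    walkCount S i j n = #{s : Fin n → S |
      (∀ l, 0 ≤ ∑ m ≤ l, (s m : ℤ × ℤ)) ∧ ∑ m, (s m : ℤ × ℤ) = (i, j)} := by
  simp only [walkCount, filter_ge_eq_Iic, Prod.le_def, Prod.fst_sum, Prod.snd_sum, Prod.fst_zero,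
    Prod.snd_zero]

theorem walkCount_succ (S : Finset (ℤ × ℤ)) {i j : ℤ} (hi : 0 ≤ i) (hj : 0 ≤ j) (n : ℕ) :
    walkCount S i j (n + 1) = ∑ p ∈ S, walkCount S (i - p.1) (j - p.2) n := by
  simp only [walkCount_eq_card, card_filter]
  rw [← (Fin.snocEquiv fun _ => S).sum_comp, Fintype.sum_prod_type, ← sum_coe_sort S]
  refine sum_congr rfl fun p _ => sum_congr rfl fun t _ => ?_
  have hcoe : (fun m => ((Fin.snocEquiv (fun _ => S) (p, t) m : S) : ℤ × ℤ)) =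
      Fin.snoc (fun m => (t m : ℤ × ℤ)) (p : ℤ × ℤ) := by
    ext m <;> cases m using Fin.lastCases <;> simp
  simp only [hcoe]
  refine if_congr ?_ rfl rfl
  rw [Fin.forall_sum_Iic_snoc_nonneg, Fin.sum_univ_castSucc]
  simp only [Fin.snoc_castSucc, Fin.snoc_last]
  have hend : ∀ v : ℤ × ℤ, v + p = (i, j) ↔ v = (i - (p : ℤ × ℤ).1, j - (p : ℤ × ℤ).2) :=
    fun v => eq_sub_iff_add_eq.symm
  refine ⟨fun h => ⟨h.1.1, (hend _).mp h.2⟩, fun ⟨h, hsum⟩ => ⟨⟨h, ?_⟩, (hend _).mpr hsum⟩⟩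
  rw [(hend _).mpr hsum]
  exact Prod.mk_le_mk.mpr ⟨hi, hj⟩

theorem mem_Icc_of_walkCount_ne_zero {S : Finset (ℤ × ℤ)} (hS : ∀ p ∈ S, p ≤ 1) {i j : ℤ} {n : ℕ}
    (h : walkCount S i j n ≠ 0) : i ∈ Set.Icc 0 (n : ℤ) ∧ j ∈ Set.Icc 0 (n : ℤ) := by
  rw [walkCount_eq_card, card_ne_zero] at h
  obtain ⟨s, hs⟩ := h
  obtain ⟨-, hprefix, hsum⟩ := mem_filter.mp hs
  have hlow : 0 ≤ ∑ m, (s m : ℤ × ℤ) := by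
    clear hsum hs
    cases n with
    | zero => simp
    | succ n => simpa [Iic_top] using hprefix ⊤
  have hup : ∑ m, (s m : ℤ × ℤ) ≤ (n : ℤ × ℤ) := by
    simpa using sum_le_card_nsmul univ _ 1 fun m _ => hS _ (s m).2
  rw [hsum, Prod.le_def] at hlow hup
  simp only [Prod.fst_natCast, Prod.snd_natCast] at hup
  exact ⟨⟨hlow.1, hup.1⟩, hlow.2, hup.2⟩

theorem walkCount_le_card_pow (S : Finset (ℤ × ℤ)) (i j : ℤ) (n : ℕ) :
    walkCount S i j n ≤ #S ^ n :=
  (card_filter_le _ _).trans_eq (by simp)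

theorem walkCount_zero_zero_zero (S : Finset (ℤ × ℤ)) : walkCount S 0 0 0 = 1 := by
  simp [walkCount_eq_card, Prod.zero_eq_mk]

noncomputable def walkPoly (S : Finset (ℤ × ℤ)) (n : ℕ) (x y : ℂ) : ℂ :=
  truncEval₂ (fun i j => (walkCount S i j n : ℂ)) (n + 1) x y

theorem mul_mul_walkPoly_succ {S : Finset (ℤ × ℤ)}
    (hS : S ⊆ ({-1, 0, 1} ×ˢ {-1, 0, 1} : Finset (ℤ × ℤ))) (n : ℕ) (x y : ℂ) :
    x * y * walkPoly S (n + 1) x y =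
      (∑ p ∈ S, x ^ (p.1 + 1) * y ^ (p.2 + 1)) * walkPoly S n x y
        - (∑ p ∈ S with p.2 = -1, x ^ (p.1 + 1)) * walkPoly S n x 0
        - (∑ p ∈ S with p.1 = -1, y ^ (p.2 + 1)) * walkPoly S n 0 y
        + delta S * walkPoly S n 0 0 := by
  have hsupp : ∀ i j, (walkCount S i j n : ℂ) ≠ 0 → i ∈ Set.Icc 0 (n : ℤ) ∧ j ∈ Set.Icc 0 (n : ℤ) :=
    fun i j h => mem_Icc_of_walkCount_ne_zero (forall_le_one_of_subset hS) (Nat.cast_ne_zero.mp h)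
  have hlast_step : walkPoly S (n + 1) x y =
      ∑ p ∈ S, truncEval₂ (fun i j => (walkCount S (i - p.1) (j - p.2) n : ℂ)) (n + 2) x y := by
    simp only [walkPoly, truncEval₂, ← truncEval_sum]
    refine truncEval_congr (fun j _ => truncEval_congr (fun i _ => ?_) x) y
    rw [walkCount_succ S (Int.natCast_nonneg i) (Int.natCast_nonneg j), Nat.cast_sum]
  rw [hlast_step, mul_sum]
  rw [sum_congr rfl fun p hp =>
    mul_mul_truncEval₂_comp_sub hsupp (mem_product.mp (hS hp)).1 (mem_product.mp (hS hp)).2 x y]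
  have hcorner : ∑ p ∈ S with p.1 = -1 ∧ p.2 = -1, (walkCount S 0 0 n : ℂ) =
      delta S * walkPoly S n 0 0 := by
    rw [walkPoly, truncEval₂_zero_zero, delta, sum_filter]
    simp only [← Prod.ext_iff (y := ((-1, -1) : ℤ × ℤ)), sum_ite_eq', ite_mul, one_mul, zero_mul]
  simp only [sum_add_distrib, sum_sub_distrib, ← sum_filter, sum_mul, hcorner]
  rfl

theorem summable_genF_term {S : Finset (ℤ × ℤ)} (hS : ∀ p ∈ S, p ≤ 1) {x y z : ℂ}
    (hx : ‖x‖ ≤ 1) (hy : ‖y‖ ≤ 1) (hz : #S * ‖z‖ < 1) :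
    Summable fun p : ℕ × ℕ × ℕ =>
      (walkCount S p.1 p.2.1 p.2.2 : ℂ) * x ^ p.1 * y ^ p.2.1 * z ^ p.2.2 := by
  set r : ℝ := #S * ‖z‖
  have hr : 0 ≤ r := by positivity
  -- Walks of length `n` end in `[0, n]²`, so with `t = r ^ (1/3)` the term at `(i, j, n)` is at
  -- most `r ^ n = t ^ n t ^ n t ^ n ≤ t ^ i t ^ j t ^ n`, a product of three geometric series.
  set t : ℝ := r ^ ((3 : ℕ) : ℝ)⁻¹
  have ht : 0 ≤ t := by positivity
  have ht1 : t < 1 := Real.rpow_lt_one hr hz (by positivity)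
  have htr : t ^ 3 = r := Real.rpow_inv_natCast_pow hr three_ne_zero
  have hgeom := summable_geometric_of_lt_one ht ht1
  refine Summable.of_norm_bounded ((hgeom.mul_of_nonneg (hgeom.mul_of_nonneg hgeom
    (fun _ => by positivity) (fun _ => by positivity)) (fun _ => by positivity)
    (fun _ => by positivity))) fun ⟨i, j, n⟩ => ?_
  dsimp only
  by_cases hq : walkCount S i j n = 0
  · rw [hq, Nat.cast_zero, zero_mul, zero_mul, zero_mul, norm_zero]
    positivity
  obtain ⟨⟨-, hi⟩, -, hj⟩ := mem_Icc_of_walkCount_ne_zero hS hq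
  have hq_le : (walkCount S i j n : ℝ) ≤ (#S : ℝ) ^ n := by
    exact_mod_cast walkCount_le_card_pow S i j n
  calc ‖(walkCount S i j n : ℂ) * x ^ i * y ^ j * z ^ n‖
      = walkCount S i j n * ‖x‖ ^ i * ‖y‖ ^ j * ‖z‖ ^ n := by
        simp only [norm_mul, norm_pow, Complex.norm_natCast]
    _ ≤ (#S : ℝ) ^ n * 1 * 1 * ‖z‖ ^ n := by
        gcongr
        · exact pow_le_one₀ (norm_nonneg x) hx
        · exact pow_le_one₀ (norm_nonneg y) hy
    _ = t ^ n * (t ^ n * t ^ n) := by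
        rw [mul_one, mul_one, ← mul_pow, show (#S : ℝ) * ‖z‖ = t ^ 3 from htr.symm]
        ring
    _ ≤ t ^ i * (t ^ j * t ^ n) := by
        have hti : t ^ n ≤ t ^ i := pow_le_pow_of_le_one ht ht1.le (by exact_mod_cast hi)
        have htj : t ^ n ≤ t ^ j := pow_le_pow_of_le_one ht ht1.le (by exact_mod_cast hj)
        gcongr

theorem hasSum_walkPoly_mul_pow {S : Finset (ℤ × ℤ)} (hS : ∀ p ∈ S, p ≤ 1) {x y z : ℂ}
    (hx : ‖x‖ ≤ 1) (hy : ‖y‖ ≤ 1) (hz : #S * ‖z‖ < 1) :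
    HasSum (fun n => walkPoly S n x y * z ^ n) (genF S x y z) := by
  let e : ℕ × ℕ × ℕ ≃ ℕ × ℕ × ℕ := (Equiv.prodAssoc ℕ ℕ ℕ).symm.trans (Equiv.prodComm _ _)
  refine (e.symm.hasSum_iff.mpr (summable_genF_term hS hx hy hz).hasSum).prod_fiberwise fun n => ?_
  have hbox : ∀ ij ∉ range (n + 1) ×ˢ range (n + 1),
      (walkCount S ij.1 ij.2 n : ℂ) * x ^ ij.1 * y ^ ij.2 * z ^ n = 0 := by
    intro ij hij
    have hq : walkCount S ij.1 ij.2 n = 0 := by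
      by_contra hq
      obtain ⟨⟨-, hi⟩, -, hj⟩ := mem_Icc_of_walkCount_ne_zero hS hq
      exact hij (mem_product.mpr ⟨mem_range.mpr (by omega), mem_range.mpr (by omega)⟩)
    simp [hq]
  have hfiber : walkPoly S n x y * z ^ n = ∑ ij ∈ range (n + 1) ×ˢ range (n + 1),
      (walkCount S ij.1 ij.2 n : ℂ) * x ^ ij.1 * y ^ ij.2 * z ^ n := by
    simp only [walkPoly, truncEval₂, truncEval, sum_product_right, sum_mul]
  rw [hfiber]
  exact hasSum_sum_of_ne_finset_zero hbox

theorem kernel_mul_genF {S : Finset (ℤ × ℤ)}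
    (hS : S ⊆ ({-1, 0, 1} ×ˢ {-1, 0, 1} : Finset (ℤ × ℤ))) {x y z : ℂ}
    (hx : ‖x‖ ≤ 1) (hy : ‖y‖ ≤ 1) (hz : #S * ‖z‖ < 1) :
    kernel S x y z * genF S x y z =
      cpoly S x z * genF S x 0 z + ctpoly S y z * genF S 0 y z - delta S * z * genF S 0 0 z
        - x * y := by
  have h0 : ‖(0 : ℂ)‖ ≤ 1 := by simp
  have hS1 := forall_le_one_of_subset hS
  have hxy := hasSum_walkPoly_mul_pow hS1 hx hy hz
  have hx0 := hasSum_walkPoly_mul_pow hS1 hx h0 hz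
  have h0y := hasSum_walkPoly_mul_pow hS1 h0 hy hz
  have h00 := hasSum_walkPoly_mul_pow hS1 h0 h0 hz
  have hconst : walkPoly S 0 x y = 1 := by
    simp [walkPoly, truncEval₂, truncEval, walkCount_zero_zero_zero]
  have htail := (hasSum_nat_add_iff' 1).mpr hxy
  simp only [sum_range_one, hconst, pow_zero, mul_one] at htail
  have hrec := (((hxy.mul_left (z * ∑ p ∈ S, x ^ (p.1 + 1) * y ^ (p.2 + 1))).sub
    (hx0.mul_left (cpoly S x z))).sub (h0y.mul_left (ctpoly S y z))).add
    (h00.mul_left (delta S * z))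
  have hstep : ∀ n, x * y * (walkPoly S (n + 1) x y * z ^ (n + 1)) =
      (z * ∑ p ∈ S, x ^ (p.1 + 1) * y ^ (p.2 + 1)) * (walkPoly S n x y * z ^ n)
        - cpoly S x z * (walkPoly S n x 0 * z ^ n) - ctpoly S y z * (walkPoly S n 0 y * z ^ n)
        + delta S * z * (walkPoly S n 0 0 * z ^ n) := fun n => by
    rw [pow_succ, cpoly, ctpoly]
    linear_combination z ^ n * z * mul_mul_walkPoly_succ hS n x y
  have hsum_eq := (htail.mul_left (x * y)).unique (hrec.congr_fun hstep)
  rw [kernel]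
  linear_combination -hsum_eq

theorem Q00_of_SW_mem_general (S : Finset (ℤ × ℤ))
    (hS : S ⊆ ({-1, 0, 1} ×ˢ {-1, 0, 1} : Finset (ℤ × ℤ)) \ {((0 : ℤ), (0 : ℤ))})
    (hSW : ((-1, -1) : ℤ × ℤ) ∈ S)
    (x₀ y₀ z : ℂ) (hx : ‖x₀‖ ≤ 1) (hy : ‖y₀‖ ≤ 1)
    (hz0 : 0 < ‖z‖) (hz : ‖z‖ < 1 / (S.card : ℝ))
    (hker : kernel S x₀ y₀ z = 0) :
    genF S 0 0 z =
      x₀ * y₀ / z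
        - (cpoly S x₀ z * genF S x₀ 0 z - z * genF S 0 0 z) / z
        - (ctpoly S y₀ z * genF S 0 y₀ z - z * genF S 0 0 z) / z := by
  have hcard : (0 : ℝ) < #S := by exact_mod_cast card_pos.mpr ⟨_, hSW⟩
  have hz' : #S * ‖z‖ < 1 := by rwa [lt_div_iff₀ hcard, mul_comm] at hz
  have hfun := kernel_mul_genF (hS.trans sdiff_subset) hx hy hz'
  rw [hker, zero_mul, delta, if_pos hSW, one_mul] at hfun
  have hz_ne : z ≠ 0 := norm_pos_iff.mp hz0
  field_simp
  linear_combination -hfun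

/-- Expression of `Q(0,0;z)` when `(−1,−1) ∈ S`, by evaluating the functional equation
at a zero of the kernel. -/
theorem Q00_of_SW_mem (S : Finset (ℤ × ℤ))
    (hS : S ⊆ ({-1, 0, 1} ×ˢ {-1, 0, 1} : Finset (ℤ × ℤ)) \ {((0 : ℤ), (0 : ℤ))})
    (hk : 1 ≤ S.card)
    (hSW : ((-1, -1) : ℤ × ℤ) ∈ S)
    (x₀ y₀ z : ℂ) (hx : ‖x₀‖ ≤ 1) (hy : ‖y₀‖ ≤ 1)
    (hz0 : 0 < ‖z‖) (hz : ‖z‖ < 1 / (S.card : ℝ))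
    (hker : kernel S x₀ y₀ z = 0) :
    genF S 0 0 z =
      x₀ * y₀ / z
        - (cpoly S x₀ z * genF S x₀ 0 z - z * genF S 0 0 z) / z
        - (ctpoly S y₀ z * genF S 0 y₀ z - z * genF S 0 0 z) / z :=
  Q00_of_SW_mem_general S hS hSW x₀ y₀ z hx hy hz0 hz hker
end
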